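/- arXiv:2208.03996 — 6 statements merged into one kernel-verified Lean document; each statement's English description precedes it below -/
import Mathlib

section
/- As bivariate formal power series over ℚ, T_x·T_y = T_x + T_y - T. Equivalently, for all (r,s) ≠ (0,0): ∑_{r1=0}^{r} ∑_{s1=0}^{s} C(r,r1)·C(s,s1)·r1·N_bi(r1,s1,0)·(s-s1)·N_bi(r-r1,s-s1,0) = (r+s-1)·N_bi(r,s,0). -/
/-!
Both sides count bipartite spanning trees of `K_{r,s}` with one marked edge `a — b`
(`a ∈ V₁`, `b ∈ V₂`). Deleting the marked edge splits such a tree into a tree on `A ⊔ B ∋ a`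
and a tree on `Aᶜ ⊔ Bᶜ ∋ b`, and conversely any two such trees with chosen roots `a ∈ A`,
`b ∈ Bᶜ` are glued back into a tree by the edge `a — b`. Sorting by `|A| = r₁`, `|B| = s₁`
gives the convolution on the left; on the right, every tree has `r + s - 1` edges. Read with
exponential weights, this is the coefficientwise form of `T_x T_y = T_x + T_y - T`, the
`(0,0)` coefficient being trivial since `N_bi(0,0,0) = 0`.
-/

open Finset

/-- Number of simple connected bipartite graphs on the labeled vertex set
`Fin r ⊕ Fin s`, with all edges joining the two parts and exactly
`r + s - 1 + k` edges (so `k` is the Betti number). -/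
noncomputable def Nbi (r s k : ℕ) : ℕ :=
  Nat.card {G : SimpleGraph (Fin r ⊕ Fin s) //
    G.Connected ∧
    (∀ a b, ¬ G.Adj (Sum.inl a) (Sum.inl b)) ∧
    (∀ a b, ¬ G.Adj (Sum.inr a) (Sum.inr b)) ∧
    Nat.card G.edgeSet = r + s - 1 + k}

/-- `F_k(x,y) = ∑ N_bi(r,s,k) x^r y^s / (r! s!)`. -/
noncomputable def Fk (k : ℕ) : MvPowerSeries (Fin 2) ℚ :=
  fun m => (Nbi (m 0) (m 1) k : ℚ) / ((m 0).factorial * (m 1).factorial)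

/-- `T_x = x ∂T/∂x`, coefficientwise `r · N_bi(r,s,0)/(r! s!)`. -/
noncomputable def Tx : MvPowerSeries (Fin 2) ℚ :=
  fun m => (m 0 : ℚ) * (Nbi (m 0) (m 1) 0 : ℚ) / ((m 0).factorial * (m 1).factorial)

/-- `T_y = y ∂T/∂y`, coefficientwise `s · N_bi(r,s,0)/(r! s!)`. -/
noncomputable def Ty : MvPowerSeries (Fin 2) ℚ :=
  fun m => (m 1 : ℚ) * (Nbi (m 0) (m 1) 0 : ℚ) / ((m 0).factorial * (m 1).factorial)

noncomputable def Zs : MvPowerSeries (Fin 2) ℚ := Tx + Ty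

noncomputable def Ws : MvPowerSeries (Fin 2) ℚ := Tx * Ty

/-- `T(x,y) = ∑ N_bi(r,s,0) x^r y^s/(r! s!)`, the spanning-tree generating function. -/
noncomputable def Ts : MvPowerSeries (Fin 2) ℚ :=
  fun m => (Nbi (m 0) (m 1) 0 : ℚ) / ((m 0).factorial * (m 1).factorial)

theorem Fintype.sum_finset_apply_card {γ M : Type*} [Fintype γ] [AddCommMonoid M] (g : ℕ → M) :
    ∑ C : Finset γ, g #C = ∑ k ∈ range (Fintype.card γ + 1), (Fintype.card γ).choose k • g k := by
  rw [← Finset.powerset_univ, Finset.sum_powerset_apply_card, Finset.card_univ]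

namespace SimpleGraph

section Connectivity

variable {V W : Type*} {G : SimpleGraph V}

theorem Reachable.comap_of_adj_closed {f : W → V} (hf : f.Injective)
    (hclosed : ∀ ⦃x y⦄, G.Adj x y → x ∈ Set.range f → y ∈ Set.range f) {w w' : W}
    (h : G.Reachable (f w) (f w')) : (G.comap f).Reachable w w' := by
  obtain ⟨p⟩ := h
  suffices ∀ {x y} (p : G.Walk x y) (w w' : W), f w = x → f w' = y → (G.comap f).Reachable w w'
    from this p w w' rfl rfl
  intro x y p
  induction p with
  | nil => rintro w w' rfl hw; exact hf hw ▸ .rfl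
  | cons hadj p ih =>
    rintro w w' rfl hw'
    obtain ⟨z, rfl⟩ := hclosed hadj ⟨w, rfl⟩
    exact Adj.reachable (G := G.comap f) hadj |>.trans (ih z w' rfl hw')

theorem Connected.reachable_deleteEdges_or (hG : G.Connected) {x y : V} (hxy : G.Adj x y)
    (w : V) :
    (G.deleteEdges {s(x, y)}).Reachable w x ∨ (G.deleteEdges {s(x, y)}).Reachable w y := by
  classical
  obtain ⟨P, hP⟩ := hG.exists_isPath w x
  by_cases heP : s(x, y) ∈ P.edges
  · have hyP := P.snd_mem_support_of_mem_edges heP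
    have hxP := Walk.endpoint_notMem_support_takeUntil hP hyP hxy.ne
    refine .inr ⟨(P.takeUntil y hyP).toDeleteEdges {s(x, y)} fun e he h ↦ hxP ?_⟩
    exact (P.takeUntil y hyP).fst_mem_support_of_mem_edges (Set.mem_singleton_iff.mp h ▸ he)
  · refine .inl ⟨P.toDeleteEdges {s(x, y)} fun e he h ↦ heP ?_⟩
    exact Set.mem_singleton_iff.mp h ▸ he

end Connectivity

section Crossing

variable {α β : Type*}

def crossGraph (R : α → β → Prop) : SimpleGraph (α ⊕ β) where
  Adj
    | .inl a, .inr b => R a b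
    | .inr b, .inl a => R a b
    | _, _ => False
  symm := ⟨by rintro (a | b) (a' | b') h <;> exact h⟩
  loopless := ⟨by rintro (a | b) h <;> exact h⟩

@[simp] theorem crossGraph_adj_inl_inr {R : α → β → Prop} {a : α} {b : β} :
    (crossGraph R).Adj (.inl a) (.inr b) ↔ R a b := .rfl

def IsCrossing (G : SimpleGraph (α ⊕ β)) : Prop :=
  (∀ a a', ¬ G.Adj (.inl a) (.inl a')) ∧ ∀ b b', ¬ G.Adj (.inr b) (.inr b')

theorem isCrossing_crossGraph (R : α → β → Prop) : (crossGraph R).IsCrossing :=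
  ⟨fun _ _ h ↦ h, fun _ _ h ↦ h⟩

theorem IsCrossing.ext {G H : SimpleGraph (α ⊕ β)} (hG : G.IsCrossing) (hH : H.IsCrossing)
    (h : ∀ a b, G.Adj (.inl a) (.inr b) ↔ H.Adj (.inl a) (.inr b)) : G = H := by
  ext (a | b) (a' | b')
  · simp [hG.1, hH.1]
  · exact h a b'
  · rw [G.adj_comm, H.adj_comm]; exact h a' b
  · simp [hG.2, hH.2]

def crossEdgeSet (G : SimpleGraph (α ⊕ β)) : Set (α × β) := {p | G.Adj (.inl p.1) (.inr p.2)}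

theorem IsCrossing.card_crossEdgeSet {G : SimpleGraph (α ⊕ β)} (hG : G.IsCrossing) :
    Nat.card G.crossEdgeSet = Nat.card G.edgeSet := by
  refine Nat.card_eq_of_bijective (fun p ↦ ⟨s(.inl p.1.1, .inr p.1.2), p.2⟩) ⟨?_, ?_⟩
  · rintro ⟨⟨a, b⟩, _⟩ ⟨⟨a', b'⟩, _⟩ h
    simpa [Subtype.ext_iff, Sym2.eq_iff] using h
  · rintro ⟨e, he⟩
    induction e with | h x y => ?_
    rcases x with a | b <;> rcases y with a' | b'
    · exact (hG.1 a a' he).elim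
    · exact ⟨⟨(a, b'), he⟩, rfl⟩
    · exact ⟨⟨(a', b), he.symm⟩, Subtype.ext Sym2.eq_swap⟩
    · exact (hG.2 b b' he).elim

def restrict (A : Finset α) (B : Finset β) (G : SimpleGraph (α ⊕ β)) : SimpleGraph (A ⊕ B) :=
  G.comap (Sum.map (↑) (↑))

theorem IsCrossing.restrict {G : SimpleGraph (α ⊕ β)} (hG : G.IsCrossing) (A : Finset α)
    (B : Finset β) : (G.restrict A B).IsCrossing :=
  ⟨fun a a' ↦ hG.1 a a', fun b b' ↦ hG.2 b b'⟩

theorem Connected.reachable_of_restrict {G : SimpleGraph (α ⊕ β)} {A : Finset α} {B : Finset β}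
    (hc : (G.restrict A B).Connected) (z z' : A ⊕ B) :
    G.Reachable (Sum.map (↑) (↑) z) (Sum.map (↑) (↑) z') :=
  (hc z z').map (Hom.comap _ G)

theorem connected_restrict_of_forall_mem_iff_reachable {G : SimpleGraph (α ⊕ β)}
    {A : Finset α} {B : Finset β} {z₀ : α ⊕ β}
    (h : ∀ z, Sum.elim (· ∈ A) (· ∈ B) z ↔ G.Reachable z z₀) : (G.restrict A B).Connected := by
  have mem_range z : z ∈ Set.range (Sum.map ((↑) : A → α) ((↑) : B → β)) ↔ G.Reachable z z₀ := by
    rw [← h]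
    rcases z with x | y <;> simp
  have hinj : (Sum.map ((↑) : A → α) ((↑) : B → β)).Injective :=
    Sum.map_injective.mpr ⟨Subtype.val_injective, Subtype.val_injective⟩
  obtain ⟨w₀, hw₀⟩ := (mem_range z₀).mpr .rfl
  refine (connected_iff_exists_forall_reachable _).mpr ⟨w₀, fun w ↦ ?_⟩
  refine Reachable.comap_of_adj_closed hinj (fun x y hxy hx ↦ ?_) ?_
  · exact (mem_range y).mpr (hxy.symm.reachable.trans ((mem_range x).mp hx))
  · exact (hw₀ ▸ (mem_range _).mp ⟨w, rfl⟩).symm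

end Crossing

section Glue

variable {α β : Type*} [Fintype α] [Fintype β] [DecidableEq α] [DecidableEq β]
  {A : Finset α} {B : Finset β}

theorem exists_sumMap_eq_or (A : Finset α) (B : Finset β) (w : α ⊕ β) :
    (∃ z : A ⊕ B, Sum.map (↑) (↑) z = w) ∨ ∃ z : ↥Aᶜ ⊕ ↥Bᶜ, Sum.map (↑) (↑) z = w := by
  rcases w with x | y
  · by_cases hx : x ∈ A
    · exact .inl ⟨.inl ⟨x, hx⟩, rfl⟩
    · exact .inr ⟨.inl ⟨x, Finset.mem_compl.mpr hx⟩, rfl⟩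
  · by_cases hy : y ∈ B
    · exact .inl ⟨.inr ⟨y, hy⟩, rfl⟩
    · exact .inr ⟨.inr ⟨y, Finset.mem_compl.mpr hy⟩, rfl⟩

def join (T₁ : SimpleGraph (A ⊕ B)) (T₂ : SimpleGraph (↥Aᶜ ⊕ ↥Bᶜ)) : SimpleGraph (α ⊕ β) :=
  crossGraph fun x y ↦
    (∃ (hx : x ∈ A) (hy : y ∈ B), T₁.Adj (.inl ⟨x, hx⟩) (.inr ⟨y, hy⟩)) ∨
      ∃ (hx : x ∈ Aᶜ) (hy : y ∈ Bᶜ), T₂.Adj (.inl ⟨x, hx⟩) (.inr ⟨y, hy⟩)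

def glue (T₁ : SimpleGraph (A ⊕ B)) (T₂ : SimpleGraph (↥Aᶜ ⊕ ↥Bᶜ)) (a : A) (b : ↥Bᶜ) :
    SimpleGraph (α ⊕ β) :=
  crossGraph fun x y ↦ (join T₁ T₂).Adj (.inl x) (.inr y) ∨ x = a ∧ y = b

variable {T₁ : SimpleGraph (A ⊕ B)} {T₂ : SimpleGraph (↥Aᶜ ⊕ ↥Bᶜ)}

theorem isCrossing_glue (a : A) (b : ↥Bᶜ) : (glue T₁ T₂ a b).IsCrossing :=
  isCrossing_crossGraph _

theorem restrict_join_left (hT₁ : T₁.IsCrossing) : (join T₁ T₂).restrict A B = T₁ := by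
  refine ((isCrossing_crossGraph _).restrict A B).ext hT₁ fun x y ↦ ?_
  simp [restrict, x.2, y.2]

theorem restrict_join_right (hT₂ : T₂.IsCrossing) : (join T₁ T₂).restrict Aᶜ Bᶜ = T₂ := by
  refine ((isCrossing_crossGraph _).restrict Aᶜ Bᶜ).ext hT₂ fun x y ↦ ?_
  simp [restrict, Finset.mem_compl.mp x.2, Finset.mem_compl.mp y.2]

theorem glue_deleteEdges (a : A) (b : ↥Bᶜ) :
    (glue T₁ T₂ a b).deleteEdges {s(.inl ↑a, .inr ↑b)} = join T₁ T₂ := by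
  refine IsCrossing.ext ⟨fun x x' h ↦ h.1, fun y y' h ↦ h.1⟩ (isCrossing_crossGraph _)
    fun x y ↦ ?_
  simp only [deleteEdges_adj, glue, crossGraph_adj_inl_inr, Set.mem_singleton_iff, Sym2.eq_iff,
    Sum.inl.injEq, Sum.inr.injEq, reduceCtorEq, and_false, or_false]
  refine ⟨fun ⟨h, hne⟩ ↦ h.resolve_right hne, fun h ↦ ⟨.inl h, ?_⟩⟩
  rintro ⟨rfl, rfl⟩
  rcases h with ⟨-, hy, -⟩ | ⟨hx, -, -⟩
  · exact Finset.mem_compl.mp b.2 hy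
  · exact Finset.mem_compl.mp hx a.2

theorem Reachable.sumElim_mem_iff_of_join {z w : α ⊕ β} (h : (join T₁ T₂).Reachable z w) :
    Sum.elim (· ∈ A) (· ∈ B) z ↔ Sum.elim (· ∈ A) (· ∈ B) w := by
  have mem_iff_of_adj {x y} (h : (join T₁ T₂).Adj (.inl x) (.inr y)) : x ∈ A ↔ y ∈ B := by
    rcases h with ⟨hx, hy, -⟩ | ⟨hx, hy, -⟩
    · simp [hx, hy]
    · simp [Finset.mem_compl.mp hx, Finset.mem_compl.mp hy]
  obtain ⟨p⟩ := h
  induction p with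
  | nil => rfl
  | @cons z w _ hadj _ ih =>
    refine Iff.trans ?_ ih
    rcases z with x | y <;> rcases w with x' | y'
    exacts [hadj.elim, mem_iff_of_adj hadj, (mem_iff_of_adj hadj.symm).symm, hadj.elim]

theorem sumElim_mem_iff_reachable_join (hT₁ : T₁.IsCrossing) (hc : T₁.Connected) (a : A)
    (z : α ⊕ β) : Sum.elim (· ∈ A) (· ∈ B) z ↔ (join T₁ T₂).Reachable z (.inl ↑a) := by
  refine ⟨fun hz ↦ ?_, fun h ↦ h.sumElim_mem_iff_of_join.mpr a.2⟩
  rw [← restrict_join_left (T₂ := T₂) hT₁] at hc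
  rcases z with x | y
  · exact hc.reachable_of_restrict (.inl ⟨x, hz⟩) (.inl a)
  · exact hc.reachable_of_restrict (.inr ⟨y, hz⟩) (.inl a)

theorem glue_connected (hT₁ : T₁.IsCrossing) (hc₁ : T₁.Connected) (hT₂ : T₂.IsCrossing)
    (hc₂ : T₂.Connected) (a : A) (b : ↥Bᶜ) : (glue T₁ T₂ a b).Connected := by
  have hle : join T₁ T₂ ≤ glue T₁ T₂ a b := glue_deleteEdges a b ▸ deleteEdges_le _
  rw [← restrict_join_left (T₂ := T₂) hT₁] at hc₁
  rw [← restrict_join_right (T₁ := T₁) hT₂] at hc₂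
  have hab : (glue T₁ T₂ a b).Reachable (.inl ↑a) (.inr ↑b) :=
    Adj.reachable (G := glue T₁ T₂ a b) (.inr ⟨rfl, rfl⟩)
  refine (connected_iff_exists_forall_reachable _).mpr ⟨.inl ↑a, fun w ↦ ?_⟩
  rcases exists_sumMap_eq_or A B w with ⟨z, rfl⟩ | ⟨z, rfl⟩
  · exact (hc₁.reachable_of_restrict (.inl a) z).mono hle
  · exact hab.trans ((hc₂.reachable_of_restrict (.inr b) z).mono hle)

theorem crossEdgeSet_glue (a : A) (b : ↥Bᶜ) :
    (glue T₁ T₂ a b).crossEdgeSet = insert (↑a, ↑b)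
      (Prod.map (↑) (↑) '' T₁.crossEdgeSet ∪ Prod.map (↑) (↑) '' T₂.crossEdgeSet) := by
  ext ⟨x, y⟩
  simp only [crossEdgeSet, glue, join, Set.mem_insert_iff, Set.mem_union, Set.mem_image,
    Set.mem_ofPred_eq, crossGraph_adj_inl_inr, Prod.mk.injEq, Prod.exists, Prod.map,
    Subtype.exists]
  grind

theorem card_crossEdgeSet_glue (a : A) (b : ↥Bᶜ) :
    Nat.card (glue T₁ T₂ a b).crossEdgeSet =
      Nat.card T₁.crossEdgeSet + Nat.card T₂.crossEdgeSet + 1 := by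
  have hinj {P : Finset α} {Q : Finset β} : (Prod.map ((↑) : P → α) ((↑) : Q → β)).Injective :=
    Subtype.val_injective.prodMap Subtype.val_injective
  simp only [Nat.card_coe_set_eq, crossEdgeSet_glue]
  rw [Set.ncard_insert_of_notMem, Set.ncard_union_eq, Set.ncard_image_of_injective _ hinj,
    Set.ncard_image_of_injective _ hinj]
  · rw [Set.disjoint_left]
    rintro _ ⟨⟨x, y⟩, -, rfl⟩ ⟨⟨x', y'⟩, -, h⟩
    simp only [Prod.map, Prod.mk.injEq] at h
    exact Finset.mem_compl.mp x'.2 (h.1 ▸ x.2)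
  · rintro (⟨⟨x, y⟩, -, h⟩ | ⟨⟨x, y⟩, -, h⟩) <;> simp only [Prod.map, Prod.mk.injEq] at h
    · exact Finset.mem_compl.mp b.2 (h.2 ▸ y.2)
    · exact Finset.mem_compl.mp x.2 (h.1 ▸ a.2)

theorem glue_isTree (h₁ : T₁.IsTree) (hT₁ : T₁.IsCrossing) (h₂ : T₂.IsTree)
    (hT₂ : T₂.IsCrossing) (a : A) (b : ↥Bᶜ) : (glue T₁ T₂ a b).IsTree := by
  rw [isTree_iff_connected_and_card] at h₁ h₂ ⊢
  refine ⟨glue_connected hT₁ h₁.1 hT₂ h₂.1 a b, ?_⟩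
  have hA : 0 < #A := Finset.card_pos.mpr ⟨a, a.2⟩
  have hA' := Finset.card_add_card_compl A
  have hB' := Finset.card_add_card_compl B
  rw [← (isCrossing_glue a b).card_crossEdgeSet, card_crossEdgeSet_glue,
    hT₁.card_crossEdgeSet, hT₂.card_crossEdgeSet]
  simp only [Nat.card_eq_fintype_card, Fintype.card_sum, Fintype.card_coe] at h₁ h₂ ⊢
  omega

theorem glue_restrict_eq {G : SimpleGraph (α ⊕ β)} (hGc : G.IsCrossing) {u : α} {v : β}
    (huv : G.Adj (.inl u) (.inr v)) (hu : u ∈ A) (hv : v ∈ Bᶜ)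
    (hAB : ∀ x y, (G.deleteEdges {s(.inl u, .inr v)}).Adj (.inl x) (.inr y) → (x ∈ A ↔ y ∈ B)) :
    glue (G.restrict A B) (G.restrict Aᶜ Bᶜ) ⟨u, hu⟩ ⟨v, hv⟩ = G := by
  refine (isCrossing_glue _ _).ext hGc fun x y ↦ ?_
  simp only [glue, join, restrict, crossGraph_adj_inl_inr, comap_adj, Sum.map_inl,
    Sum.map_inr, exists_prop]
  refine ⟨by rintro ((⟨-, -, h⟩ | ⟨-, -, h⟩) | ⟨rfl, rfl⟩) <;> assumption, fun h ↦ ?_⟩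
  by_cases he : x = u ∧ y = v
  · exact .inr he
  have hxy := hAB x y (by simpa [h, Sym2.eq_iff] using fun hx hy ↦ he ⟨hx, hy⟩)
  by_cases hx : x ∈ A
  · exact .inl (.inl ⟨hx, hxy.mp hx, h⟩)
  · exact .inl (.inr ⟨Finset.mem_compl.mpr hx, Finset.mem_compl.mpr (hx ∘ hxy.mpr), h⟩)

theorem IsTree.exists_glue_eq {G : SimpleGraph (α ⊕ β)} (hG : G.IsTree) (hGc : G.IsCrossing)
    {u : α} {v : β} (huv : G.Adj (.inl u) (.inr v)) :
    ∃ (A : Finset α) (B : Finset β) (T₁ : SimpleGraph (A ⊕ B)) (T₂ : SimpleGraph (↥Aᶜ ⊕ ↥Bᶜ))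
      (hu : u ∈ A) (hv : v ∈ Bᶜ), T₁.IsTree ∧ T₁.IsCrossing ∧ T₂.IsTree ∧ T₂.IsCrossing ∧
        glue T₁ T₂ ⟨u, hu⟩ ⟨v, hv⟩ = G := by
  classical
  set G' := G.deleteEdges {s(.inl u, .inr v)}
  have hbridge : ¬ G'.Reachable (.inl u) (.inr v) :=
    isBridge_iff.mp (isAcyclic_iff_forall_adj_isBridge.mp hG.isAcyclic huv)
  set A : Finset α := {x | G'.Reachable (.inl x) (.inl u)}
  set B : Finset β := {y | G'.Reachable (.inr y) (.inl u)}
  have mem_iff z : Sum.elim (· ∈ A) (· ∈ B) z ↔ G'.Reachable z (.inl u) := by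
    rcases z with x | y <;> simp [A, B]
  have mem_compl_iff z : Sum.elim (· ∈ Aᶜ) (· ∈ Bᶜ) z ↔ G'.Reachable z (.inr v) := by
    have hz : Sum.elim (· ∈ Aᶜ) (· ∈ Bᶜ) z ↔ ¬ Sum.elim (· ∈ A) (· ∈ B) z := by
      rcases z with x | y <;> simp
    rw [hz, mem_iff]
    exact ⟨(hG.connected.reachable_deleteEdges_or huv z).resolve_left,
      fun h h' ↦ hbridge (h'.symm.trans h)⟩
  have isTree_restrict {P : Finset α} {Q : Finset β} (hc : (G'.restrict P Q).Connected) :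
      (G.restrict P Q).IsTree :=
    ⟨hc.mono fun _ _ h ↦ deleteEdges_le (G := G) _ h, hG.isAcyclic.comap (Hom.comap _ G)
      (Sum.map_injective.mpr ⟨Subtype.val_injective, Subtype.val_injective⟩)⟩
  have hu : u ∈ A := (mem_iff (.inl u)).mpr .rfl
  have hv : v ∈ Bᶜ := (mem_compl_iff (.inr v)).mpr .rfl
  refine ⟨A, B, G.restrict A B, G.restrict Aᶜ Bᶜ, hu, hv,
    isTree_restrict (connected_restrict_of_forall_mem_iff_reachable mem_iff), hGc.restrict A B,
    isTree_restrict (connected_restrict_of_forall_mem_iff_reachable mem_compl_iff),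
    hGc.restrict Aᶜ Bᶜ, glue_restrict_eq hGc huv hu hv fun x y h ↦ ?_⟩
  exact (mem_iff (.inl x)).trans ⟨h.symm.reachable.trans, h.reachable.trans⟩ |>.trans
    (mem_iff (.inr y)).symm

end Glue

def BiTree (α β : Type*) : Type _ := {G : SimpleGraph (α ⊕ β) // G.IsTree ∧ G.IsCrossing}

def EdgeRootedBiTree (α β : Type*) : Type _ := Σ T : BiTree α β, T.1.crossEdgeSet

def RootedBiTreePair (α β : Type*) [Fintype α] [Fintype β] [DecidableEq α] [DecidableEq β] :
    Type _ :=
  Σ (A : Finset α) (B : Finset β), (BiTree A B × A) × (BiTree ↥Aᶜ ↥Bᶜ × ↥Bᶜ)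

section Bijection

variable {α β : Type*} [Fintype α] [Fintype β] [DecidableEq α] [DecidableEq β]

def RootedBiTreePair.toEdgeRootedBiTree : RootedBiTreePair α β → EdgeRootedBiTree α β
  | ⟨_, _, (T₁, a), (T₂, b)⟩ =>
    ⟨⟨glue T₁.1 T₂.1 a b, glue_isTree T₁.2.1 T₁.2.2 T₂.2.1 T₂.2.2 a b, isCrossing_glue a b⟩,
      ⟨(a, b), .inr ⟨rfl, rfl⟩⟩⟩

theorem RootedBiTreePair.toEdgeRootedBiTree_injective :
    (toEdgeRootedBiTree : RootedBiTreePair α β → _).Injective := by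
  rintro ⟨A, B, ⟨T₁, a⟩, ⟨T₂, b⟩⟩ ⟨A', B', ⟨T₁', a'⟩, ⟨T₂', b'⟩⟩ h
  have hG : glue T₁.1 T₂.1 a b = glue T₁'.1 T₂'.1 a' b' := congrArg (·.1.1) h
  obtain ⟨ha, hb⟩ : (a : α) = a' ∧ (b : β) = b' := Prod.ext_iff.mp (congrArg (·.2.1) h)
  have hjoin : join T₁.1 T₂.1 = join T₁'.1 T₂'.1 := by
    rw [← glue_deleteEdges a b, ← glue_deleteEdges a' b', hG, ha, hb]
  have hmem z := (sumElim_mem_iff_reachable_join T₁.2.2 T₁.2.1.connected a z).trans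
    (hjoin ▸ ha ▸ sumElim_mem_iff_reachable_join T₁'.2.2 T₁'.2.1.connected a' z).symm
  obtain rfl : A = A' := Finset.ext fun x ↦ hmem (.inl x)
  obtain rfl : B = B' := Finset.ext fun y ↦ hmem (.inr y)
  obtain rfl : T₁ = T₁' := Subtype.ext <|
    (restrict_join_left T₁.2.2).symm.trans (hjoin ▸ restrict_join_left T₁'.2.2)
  obtain rfl : T₂ = T₂' := Subtype.ext <|
    (restrict_join_right T₂.2.2).symm.trans (hjoin ▸ restrict_join_right T₂'.2.2)
  obtain rfl := Subtype.ext ha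
  obtain rfl := Subtype.ext hb
  rfl

theorem RootedBiTreePair.toEdgeRootedBiTree_surjective :
    (toEdgeRootedBiTree : RootedBiTreePair α β → _).Surjective := by
  rintro ⟨⟨G, hG, hGc⟩, ⟨⟨u, v⟩, huv⟩⟩
  obtain ⟨A, B, T₁, T₂, hu, hv, h₁, hc₁, h₂, hc₂, rfl⟩ := hG.exists_glue_eq hGc huv
  exact ⟨⟨A, B, (⟨T₁, h₁, hc₁⟩, ⟨u, hu⟩), (⟨T₂, h₂, hc₂⟩, ⟨v, hv⟩)⟩, rfl⟩

end Bijection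

section Counting

variable {α β : Type*}

theorem card_biTree_fin (r s : ℕ) : Nat.card (BiTree (Fin r) (Fin s)) = Nbi r s 0 := by
  refine Nat.card_congr (Equiv.subtypeEquivRight fun G ↦ ?_)
  rw [isTree_iff_connected_and_card, Nat.card_sum, Nat.card_eq_fintype_card (α := Fin r),
    Nat.card_eq_fintype_card (α := Fin s), Fintype.card_fin, Fintype.card_fin, IsCrossing]
  constructor
  · rintro ⟨⟨hc, hcard⟩, h₁, h₂⟩
    exact ⟨hc, h₁, h₂, by omega⟩
  · rintro ⟨hc, h₁, h₂, hcard⟩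
    have : 0 < r + s := by rcases hc.nonempty with ⟨x | x⟩ <;> have := x.pos <;> omega
    exact ⟨⟨hc, by omega⟩, h₁, h₂⟩

def BiTree.congr {α' β' : Type*} (e₁ : α ≃ α') (e₂ : β ≃ β') : BiTree α β ≃ BiTree α' β' :=
  (Equiv.sumCongr e₁ e₂).simpleGraph.subtypeEquiv fun G ↦ by
    refine and_congr (Iso.comap (Equiv.sumCongr e₁ e₂).symm G).isTree_iff.symm ?_
    simp [IsCrossing, e₁.symm.surjective.forall, e₂.symm.surjective.forall]

instance [Finite α] [Finite β] : Finite (BiTree α β) := Subtype.finite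

variable [Fintype α] [Fintype β]

theorem card_biTree : Nat.card (BiTree α β) = Nbi (Fintype.card α) (Fintype.card β) 0 := by
  rw [← card_biTree_fin, Nat.card_congr (BiTree.congr (Fintype.equivFin α) (Fintype.equivFin β))]

theorem card_edgeRootedBiTree [DecidableEq α] [DecidableEq β] :
    Nat.card (EdgeRootedBiTree α β) =
      (Fintype.card α + Fintype.card β - 1) * Nbi (Fintype.card α) (Fintype.card β) 0 := by
  have := Fintype.ofFinite (BiTree α β)
  have hT (T : BiTree α β) : Nat.card T.1.crossEdgeSet = Fintype.card α + Fintype.card β - 1 := by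
    have := (isTree_iff_connected_and_card.mp T.2.1).2
    rw [T.2.2.card_crossEdgeSet]
    simp only [Nat.card_eq_fintype_card, Fintype.card_sum] at this ⊢
    omega
  simp only [EdgeRootedBiTree, Nat.card_sigma, hT, Finset.sum_const, Finset.card_univ,
    smul_eq_mul, ← Nat.card_eq_fintype_card, card_biTree, mul_comm]

theorem sum_finset_sum_finset_apply_card {M : Type*} [AddCommMonoid M] (f : ℕ → ℕ → M) :
    ∑ A : Finset α, ∑ B : Finset β, f #A #B =
      ∑ r ∈ range (Fintype.card α + 1), ∑ s ∈ range (Fintype.card β + 1),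
        ((Fintype.card α).choose r * (Fintype.card β).choose s) • f r s := by
  rw [Fintype.sum_finset_apply_card fun r ↦ ∑ B : Finset β, f r #B]
  simp only [Fintype.sum_finset_apply_card, Finset.smul_sum, mul_smul]

theorem card_rootedBiTreePair [DecidableEq α] [DecidableEq β] :
    Nat.card (RootedBiTreePair α β) =
      ∑ r₁ ∈ range (Fintype.card α + 1), ∑ s₁ ∈ range (Fintype.card β + 1),
        (Fintype.card α).choose r₁ * (Fintype.card β).choose s₁ * r₁ * Nbi r₁ s₁ 0 *
          (Fintype.card β - s₁) * Nbi (Fintype.card α - r₁) (Fintype.card β - s₁) 0 := by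
  simp only [RootedBiTreePair, Nat.card_sigma, Nat.card_prod, card_biTree,
    Nat.card_eq_fintype_card, Fintype.card_coe, Finset.card_compl]
  rw [sum_finset_sum_finset_apply_card fun r₁ s₁ ↦ Nbi r₁ s₁ 0 * r₁ *
    (Nbi (Fintype.card α - r₁) (Fintype.card β - s₁) 0 * (Fintype.card β - s₁))]
  simp only [smul_eq_mul]
  exact Finset.sum_congr rfl fun _ _ ↦ Finset.sum_congr rfl fun _ _ ↦ by ring

end Counting

end SimpleGraph

open SimpleGraph in
theorem sum_choose_mul_nbi (r s : ℕ) :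
    ∑ r₁ ∈ range (r + 1), ∑ s₁ ∈ range (s + 1),
      r.choose r₁ * s.choose s₁ * r₁ * Nbi r₁ s₁ 0 * (s - s₁) * Nbi (r - r₁) (s - s₁) 0 =
        (r + s - 1) * Nbi r s 0 := by
  have := Nat.card_eq_of_bijective _ ⟨RootedBiTreePair.toEdgeRootedBiTree_injective,
    RootedBiTreePair.toEdgeRootedBiTree_surjective (α := Fin r) (β := Fin s)⟩
  rwa [card_rootedBiTreePair, card_edgeRootedBiTree, Fintype.card_fin, Fintype.card_fin] at this

theorem nbi_zero_zero : Nbi 0 0 0 = 0 := by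
  rw [Nbi, Nat.card_eq_zero]
  exact .inl ⟨fun ⟨G, hG, _⟩ ↦ by rcases hG.nonempty with ⟨x | x⟩ <;> exact x.elim0⟩

-- `r + s - 1` truncates in `ℕ` at `r = s = 0`, where both sides vanish by `nbi_zero_zero`.
theorem sum_choose_mul_nbi_rat (r s : ℕ) :
    ∑ r₁ ∈ range (r + 1), ∑ s₁ ∈ range (s + 1),
      (r.choose r₁ : ℚ) * s.choose s₁ * r₁ * Nbi r₁ s₁ 0 * ((s - s₁ : ℕ) : ℚ) *
        Nbi (r - r₁) (s - s₁) 0 = ((r : ℚ) + s - 1) * Nbi r s 0 := by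
  rcases Nat.eq_zero_or_pos (r + s) with h | h
  · obtain ⟨rfl, rfl⟩ : r = 0 ∧ s = 0 := by omega
    simp [nbi_zero_zero]
  · have := congrArg (Nat.cast : ℕ → ℚ) (sum_choose_mul_nbi r s)
    push_cast [Nat.cast_sub h] at this
    exact this

theorem MvPowerSeries.coeff_mul_fin_two {R : Type*} [CommSemiring R]
    (F G : MvPowerSeries (Fin 2) R) (m : Fin 2 →₀ ℕ) :
    coeff m (F * G) = ∑ i ∈ range (m 0 + 1), ∑ j ∈ range (m 1 + 1),
      coeff (.single 0 i + .single 1 j) F * coeff (.single 0 (m 0 - i) + .single 1 (m 1 - j)) G := by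
  have mem_antidiagonal_iff {p : (Fin 2 →₀ ℕ) × (Fin 2 →₀ ℕ)} :
      p ∈ antidiagonal m ↔ p.1 0 + p.2 0 = m 0 ∧ p.1 1 + p.2 1 = m 1 := by
    rw [HasAntidiagonal.mem_antidiagonal, Finsupp.ext_iff, Fin.forall_fin_two]
    rfl
  rw [coeff_mul, ← Finset.sum_product']
  refine Finset.sum_nbij' (fun p ↦ (p.1 0, p.1 1)) (fun q ↦ (.single 0 q.1 + .single 1 q.2,
    .single 0 (m 0 - q.1) + .single 1 (m 1 - q.2))) ?_ ?_ ?_ ?_ ?_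
  · intro p hp
    simp only [mem_antidiagonal_iff, Finset.mem_product, Finset.mem_range] at hp ⊢
    omega
  · intro q hq
    simp only [mem_antidiagonal_iff, Finset.mem_product, Finset.mem_range] at hq ⊢
    simp
    omega
  · intro p hp
    simp only [mem_antidiagonal_iff] at hp
    ext k <;> fin_cases k <;> simp <;> omega
  · intro q hq
    simp
  · intro p hp
    simp only [mem_antidiagonal_iff] at hp
    congr <;> ext k <;> fin_cases k <;> simp <;> omega

open Nat in
theorem sum_div_factorial_mul_div_factorial (a b : ℕ → ℕ → ℚ) (r s : ℕ) :
    ∑ i ∈ range (r + 1), ∑ j ∈ range (s + 1),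
        a i j / (i ! * j !) * (b (r - i) (s - j) / ((r - i)! * (s - j)!)) =
      (∑ i ∈ range (r + 1), ∑ j ∈ range (s + 1),
        r.choose i * s.choose j * a i j * b (r - i) (s - j)) / (r ! * s !) := by
  simp only [Finset.sum_div]
  refine Finset.sum_congr rfl fun i hi ↦ Finset.sum_congr rfl fun j hj ↦ ?_
  rw [Nat.cast_choose ℚ (Nat.lt_succ_iff.mp (Finset.mem_range.mp hi)),
    Nat.cast_choose ℚ (Nat.lt_succ_iff.mp (Finset.mem_range.mp hj))]
  field_simp

/-- `T_x·T_y = T_x + T_y - T`; equivalently, for all `(r,s) ≠ (0,0)`,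
`∑_{r1,s1} C(r,r1) C(s,s1) r1 N_bi(r1,s1,0) (s-s1) N_bi(r-r1,s-s1,0)
  = (r+s-1)·N_bi(r,s,0)`. -/
theorem stmt8 :
    Tx * Ty = Tx + Ty - Ts ∧
      ∀ r s : ℕ, (r, s) ≠ (0, 0) →
        (∑ r1 ∈ Finset.range (r + 1), ∑ s1 ∈ Finset.range (s + 1),
            (r.choose r1 : ℚ) * (s.choose s1 : ℚ) * (r1 : ℚ) * (Nbi r1 s1 0 : ℚ) *
              (((s - s1 : ℕ) : ℚ)) * (Nbi (r - r1) (s - s1) 0 : ℚ)) =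
          ((r : ℚ) + s - 1) * (Nbi r s 0 : ℚ) := by
  refine ⟨MvPowerSeries.ext fun m ↦ ?_, fun r s _ ↦ sum_choose_mul_nbi_rat r s⟩
  rw [MvPowerSeries.coeff_mul_fin_two]
  simp only [MvPowerSeries.coeff_apply, Tx, Ty, Finsupp.add_apply, Finsupp.single_apply]
  simp only [Fin.isValue, ↓reduceIte, one_ne_zero, zero_ne_one, add_zero, zero_add]
  rw [sum_div_factorial_mul_div_factorial (fun i j ↦ i * Nbi i j 0) (fun k l ↦ l * Nbi k l 0)]
  simp only [← mul_assoc]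
  rw [sum_choose_mul_nbi_rat]
  change _ = Tx m + Ty m - Ts m
  simp only [Tx, Ty, Ts]
  ring
end

section
/- Let T_xy be the bivariate formal power series over ℚ whose (r,s)-coefficient is r·s·N_bi(r,s,0)/(r! s!). Then, as formal power series, T_xy·(1 - T_x·T_y) = T_x·T_y. -/
open Finset

/-- `T_xy`, coefficientwise `r·s·N_bi(r,s,0)/(r! s!)`. -/
noncomputable def Txy : MvPowerSeries (Fin 2) ℚ :=
  fun m => (m 0 : ℚ) * (m 1 : ℚ) * (Nbi (m 0) (m 1) 0 : ℚ) / ((m 0).factorial * (m 1).factorial)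

/-!
Encode a rooted tree whose vertices are 2-coloured by `side` by its parent map. Cutting a tree
rooted in `V₁` along the edge above a marked non-root vertex `w` is a bijection onto pairs
(a tree on some `S ∋ w` rooted at `w`; a tree on `Sᶜ` with the old root, marked at the old parent
of `w`, which lies on the other side). With `N(r,s) = N_bi(r,s,0)`, counting both sides for
`w ∈ V₂`, resp. `w ∈ V₁`, gives
  `r s N(r,s) = ∑ C(r,k) C(s,l) · l N(k,l) · (r-k)² N(r-k,s-l)`,
  `r (r-1) N(r,s) = ∑ C(r,k) C(s,l) · k N(k,l) · (r-k)(s-l) N(r-k,s-l)`,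
i.e. `T_xy = T_y T_xx` and `T_xx = T_x + T_x T_xy`, where `T_xx` has coefficients
`r² N(r,s)/(r! s!)`. Eliminating `T_xx` gives the claim.
-/

open Function

section ParentMap

variable {γ δ : Type*}

structure IsBipartiteParentMap (side : γ → Bool) (z : γ) (f : γ → γ) : Prop where
  map_root : f z = z
  side_map : ∀ v, v ≠ z → side (f v) = !side v
  exists_iterate_eq_root : ∀ v, ∃ n, f^[n] v = z

def BipartiteParentMap (side : γ → Bool) (z : γ) : Type _ :=
  {f : γ → γ // IsBipartiteParentMap side z f}

instance [Finite γ] {side : γ → Bool} {z : γ} : Finite (BipartiteParentMap side z) :=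
  Subtype.finite

theorem exists_iterate_eq_of_forall_ne {φ : γ → δ} {f : γ → γ} {g : δ → δ} {w : γ}
    (h : ∀ u, u ≠ w → g (φ u) = φ (f u)) {n : ℕ} {v : γ} (hn : f^[n] v = w) :
    ∃ k, g^[k] (φ v) = φ w := by
  induction n generalizing v with
  | zero => exact ⟨0, by rw [← hn]; rfl⟩
  | succ n ih =>
    by_cases hv : v = w
    · exact ⟨0, by rw [hv]; rfl⟩
    · obtain ⟨k, hk⟩ := ih (v := f v) hn
      exact ⟨k + 1, by rwa [iterate_succ_apply, h v hv]⟩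

namespace IsBipartiteParentMap

variable {side : γ → Bool} {z v : γ} {f : γ → γ}

theorem map_ne_self (hf : IsBipartiteParentMap side z f) (hv : v ≠ z) : f v ≠ v := fun h => by
  simpa [h] using hf.side_map v hv

theorem eq_root_of_isPeriodicPt (hf : IsBipartiteParentMap side z f) {n : ℕ} (hn : 0 < n)
    (hv : IsPeriodicPt f n v) : v = z := by
  obtain ⟨k, hk⟩ := hf.exists_iterate_eq_root v
  calc v = f^[n * k] v := (hv.mul_const k).eq.symm
    _ = f^[n * k - k] (f^[k] v) := by
      rw [← iterate_add_apply, Nat.sub_add_cancel (Nat.le_mul_of_pos_left k hn)]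
    _ = z := by rw [hk, iterate_fixed hf.map_root]

theorem map_map_ne_self (hf : IsBipartiteParentMap side z f) (hv : v ≠ z) : f (f v) ≠ v :=
  fun h => hv (hf.eq_root_of_isPeriodicPt two_pos h)

theorem conj (hf : IsBipartiteParentMap side z f) {side' : δ → Bool} (e : γ ≃ δ)
    (he : ∀ v, side' (e v) = side v) : IsBipartiteParentMap side' (e z) (e ∘ f ∘ e.symm) where
  map_root := by simp [hf.map_root]
  side_map v hv := by
    have hv' : e.symm v ≠ z := fun h => hv (by rw [← h, e.apply_symm_apply])
    simp only [comp_apply, he, hf.side_map _ hv', ← he (e.symm v), e.apply_symm_apply]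
  exists_iterate_eq_root v := by
    obtain ⟨n, hn⟩ := hf.exists_iterate_eq_root (e.symm v)
    have hsc : Semiconj e f (e ∘ f ∘ e.symm) := fun x => by simp
    exact ⟨n, by rw [← e.apply_symm_apply v, ← hsc.iterate_right n, hn]⟩

end IsBipartiteParentMap

theorem isBipartiteParentMap_subtypeMap {side : γ → Bool} {z : γ} {f : γ → γ} {p : γ → Prop}
    (hp : ∀ v, p v → p (f v)) (hz : p z) (h₀ : f z = z)
    (h₁ : ∀ v, p v → v ≠ z → side (f v) = !side v) (h₂ : ∀ v, p v → ∃ n, f^[n] v = z) :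
    IsBipartiteParentMap (fun x : Subtype p => side x) ⟨z, hz⟩ (Subtype.map f hp) where
  map_root := Subtype.ext h₀
  side_map x hx := h₁ x x.2 fun h => hx (Subtype.ext h)
  exists_iterate_eq_root x := by
    obtain ⟨n, hn⟩ := h₂ x x.2
    have hsc : Semiconj Subtype.val (Subtype.map f hp) f := fun _ => rfl
    exact ⟨n, Subtype.ext (by rw [hsc.iterate_right n, hn])⟩

def BipartiteParentMap.congr {side : γ → Bool} {side' : δ → Bool} (e : γ ≃ δ)
    (he : ∀ v, side' (e v) = side v) (z : γ) :
    BipartiteParentMap side z ≃ BipartiteParentMap side' (e z) where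
  toFun f := ⟨_, f.2.conj e he⟩
  invFun g := ⟨e.symm ∘ g.1 ∘ e, by
    simpa using g.2.conj e.symm fun v => by rw [← he, e.apply_symm_apply]⟩
  left_inv f := Subtype.ext (funext fun v => by simp)
  right_inv g := Subtype.ext (funext fun v => by simp)

end ParentMap

section ParentGraph

variable {γ : Type*} {side : γ → Bool} {z : γ} {f g : γ → γ}

def parentEdges (z : γ) (f : γ → γ) : Set (Sym2 γ) := (fun v => s(v, f v)) '' {z}ᶜ

def parentGraph (z : γ) (f : γ → γ) : SimpleGraph γ := SimpleGraph.fromEdgeSet (parentEdges z f)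

namespace IsBipartiteParentMap

theorem edgeSet_parentGraph (hf : IsBipartiteParentMap side z f) :
    (parentGraph z f).edgeSet = parentEdges z f := by
  rw [parentGraph, SimpleGraph.edgeSet_fromEdgeSet, _root_.sdiff_eq_self_iff_disjoint,
    Set.disjoint_left]
  rintro _ he ⟨v, hv, rfl⟩
  exact hf.map_ne_self hv (Sym2.mk_isDiag_iff.mp he).symm

theorem parentGraph_adj_map (hf : IsBipartiteParentMap side z f) {v : γ} (hv : v ≠ z) :
    (parentGraph z f).Adj v (f v) :=
  ⟨⟨v, hv, rfl⟩, (hf.map_ne_self hv).symm⟩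

theorem side_ne_of_parentGraph_adj (hf : IsBipartiteParentMap side z f) {u v : γ}
    (h : (parentGraph z f).Adj u v) : side u ≠ side v := by
  obtain ⟨⟨x, hx, hxe⟩, -⟩ := h
  rcases Sym2.eq_iff.mp hxe with ⟨rfl, rfl⟩ | ⟨rfl, rfl⟩ <;> simp [hf.side_map x hx]

theorem parentGraph_connected (hf : IsBipartiteParentMap side z f) :
    (parentGraph z f).Connected := by
  have hreach (v : γ) : (parentGraph z f).Reachable v z := by
    obtain ⟨n, hn⟩ := hf.exists_iterate_eq_root v
    induction n generalizing v with
    | zero => exact hn ▸ .refl v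
    | succ n ih =>
      by_cases hv : v = z
      · exact hv ▸ .refl v
      · exact (hf.parentGraph_adj_map hv).reachable.trans (ih (f v) hn)
  exact (SimpleGraph.connected_iff _).mpr
    ⟨fun u v => (hreach u).trans (hreach v).symm, ⟨z⟩⟩

theorem ncard_parentEdges [Finite γ] (hf : IsBipartiteParentMap side z f) :
    (parentEdges z f).ncard = Nat.card γ - 1 := by
  rw [parentEdges, Set.InjOn.ncard_image, Set.ncard_compl, Set.ncard_singleton]
  rintro u - v hv huv
  rcases Sym2.eq_iff.mp huv with ⟨h, -⟩ | ⟨h₁, h₂⟩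
  · exact h
  · exact absurd (by rw [← h₁, h₂]) (hf.map_map_ne_self hv)

/-- By induction on the distance to the root: the edge `s(v, f v)` of `g` must be `s(v, g v)`,
since otherwise `g (f v) = v` and `f v` is closer to the root, so `f (f v) = g (f v) = v`. -/
theorem eq_of_parentEdges_eq (hf : IsBipartiteParentMap side z f)
    (hg : IsBipartiteParentMap side z g) (h : parentEdges z f = parentEdges z g) : f = g := by
  have key (n : ℕ) : ∀ v, v ≠ z → f^[n] v = z → f v = g v := by
    induction n with
    | zero => exact fun v hv hn => absurd hn hv
    | succ n ih =>
      intro v hv hn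
      obtain ⟨u, hu, he⟩ : s(v, f v) ∈ parentEdges z g := h ▸ ⟨v, hv, rfl⟩
      rcases Sym2.eq_iff.mp he with ⟨rfl, h₂⟩ | ⟨h₁, h₂⟩
      · exact h₂.symm
      · subst h₁
        exact absurd (by rw [ih (f v) hu hn, h₂]) (hf.map_map_ne_self hv)
  funext v
  by_cases hv : v = z
  · rw [hv, hf.map_root, hg.map_root]
  · obtain ⟨n, hn⟩ := hf.exists_iterate_eq_root v
    exact key n v hv hn

end IsBipartiteParentMap

/-- Send each non-root vertex to a neighbour strictly closer to the root; counting shows that the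
resulting edges are all the edges of `G`. -/
theorem exists_parentGraph_eq [Finite γ] {G : SimpleGraph γ} (hconn : G.Connected)
    (hside : ∀ u v, G.Adj u v → side u ≠ side v) (hcard : Nat.card G.edgeSet = Nat.card γ - 1)
    (z : γ) : ∃ f, IsBipartiteParentMap side z f ∧ parentGraph z f = G := by
  have hpar (v : γ) (hv : v ≠ z) : ∃ y, G.Adj v y ∧ G.dist y z < G.dist v z := by
    obtain ⟨p, hp⟩ := (hconn.preconnected v z).exists_walk_length_eq_dist
    cases p with
    | nil => exact absurd rfl hv
    | cons hadj q =>
      refine ⟨_, hadj, ?_⟩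
      have := SimpleGraph.dist_le q
      rw [SimpleGraph.Walk.length_cons] at hp
      omega
  classical
  choose! f hfadj hfdist using hpar
  let f' := fun v => if v = z then z else f v
  have hf'_ne (v : γ) (hv : v ≠ z) : f' v = f v := if_neg hv
  have hreach (k : ℕ) : ∀ v, G.dist v z ≤ k → ∃ n, f'^[n] v = z := by
    induction k with
    | zero => exact fun v hv => ⟨0, by by_contra h; have := hfdist v h; omega⟩
    | succ k ih =>
      intro v hvk
      by_cases hv : v = z
      · exact ⟨0, hv⟩
      · obtain ⟨n, hn⟩ := ih (f v) (by have := hfdist v hv; omega)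
        exact ⟨n + 1, by rwa [iterate_succ_apply, hf'_ne v hv]⟩
  have hf' : IsBipartiteParentMap side z f' :=
    { map_root := if_pos rfl
      side_map := fun v hv => by
        rw [hf'_ne v hv]
        exact Bool.eq_not.mpr (hside _ _ (hfadj v hv)).symm
      exists_iterate_eq_root := fun v => hreach _ v le_rfl }
  refine ⟨f', hf', ?_⟩
  have hsub : parentEdges z f' ⊆ G.edgeSet := by
    rintro _ ⟨v, hv, rfl⟩
    rw [SimpleGraph.mem_edgeSet, hf'_ne v hv]
    exact hfadj v hv
  have heq : parentEdges z f' = G.edgeSet :=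
    Set.eq_of_subset_of_ncard_le hsub (by rw [← Nat.card_coe_set_eq, hcard, hf'.ncard_parentEdges])
  rw [← SimpleGraph.edgeSet_inj, hf'.edgeSet_parentGraph, heq]

end ParentGraph

section Card

theorem card_bipartiteParentMap_isLeft (r s : ℕ) (z : Fin r ⊕ Fin s) :
    Nat.card (BipartiteParentMap Sum.isLeft z) = Nbi r s 0 := by
  have hcard : Nat.card (Fin r ⊕ Fin s) - 1 = r + s - 1 + 0 := by simp
  refine Nat.card_eq_of_bijective (fun f => ⟨parentGraph z f.1, f.2.parentGraph_connected,
      fun a b h => f.2.side_ne_of_parentGraph_adj h rfl,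
      fun a b h => f.2.side_ne_of_parentGraph_adj h rfl, ?_⟩) ⟨?_, ?_⟩
  · rw [Nat.card_coe_set_eq, f.2.edgeSet_parentGraph, f.2.ncard_parentEdges, hcard]
  · rintro ⟨f, hf⟩ ⟨g, hg⟩ h
    refine Subtype.ext (hf.eq_of_parentEdges_eq hg ?_)
    rw [← hf.edgeSet_parentGraph, ← hg.edgeSet_parentGraph]
    exact congrArg (fun G => G.1.edgeSet) h
  · rintro ⟨G, hconn, hl, hr, hG⟩
    have hside : ∀ u v, G.Adj u v → u.isLeft ≠ v.isLeft := by
      rintro (a | b) (a' | b') h <;> simp_all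
    obtain ⟨f, hf, rfl⟩ := exists_parentGraph_eq hconn hside (hG.trans hcard.symm) z
    exact ⟨⟨f, hf⟩, rfl⟩

theorem card_bipartiteParentMap {γ : Type*} [Finite γ] (side : γ → Bool) (z : γ) :
    Nat.card (BipartiteParentMap side z) =
      Nbi (Nat.card {v // side v = true}) (Nat.card {v // side v = false}) 0 := by
  let e : γ ≃ Fin (Nat.card {v // side v = true}) ⊕ Fin (Nat.card {v // ¬side v = true}) :=
    (Equiv.sumCompl _).symm.trans (Equiv.sumCongr (Finite.equivFin _) (Finite.equivFin _))
  have he (v : γ) : (e v).isLeft = side v := by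
    cases h : side v <;> simp [e, h]
  rw [Nat.card_congr (BipartiteParentMap.congr e he z), card_bipartiteParentMap_isLeft]
  simp

end Card

section Glue

variable {γ : Type*} [DecidableEq γ] {side : γ → Bool} {S : Finset γ} {w m z : γ}
  {g₁ : S → S} {g₂ : {v // v ∉ S} → {v // v ∉ S}}

/-- Hang the tree `g₁` on `S`, rooted at `w`, below the vertex `m` of the tree `g₂` on `Sᶜ`. -/
def glue (S : Finset γ) (w : γ) (g₁ : S → S) (m : γ) (g₂ : {v // v ∉ S} → {v // v ∉ S})
    (v : γ) : γ :=
  if h : v ∈ S then (if v = w then m else g₁ ⟨v, h⟩) else g₂ ⟨v, h⟩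

theorem glue_of_mem {v : γ} (h : v ∈ S) :
    glue S w g₁ m g₂ v = if v = w then m else g₁ ⟨v, h⟩ :=
  dif_pos h

theorem semiconj_glue : Semiconj Subtype.val g₂ (glue S w g₁ m g₂) :=
  fun y => by rw [glue, dif_neg y.2]

theorem exists_iterate_glue_eq (hw : w ∈ S)
    (h₁ : IsBipartiteParentMap (fun x : S => side x) ⟨w, hw⟩ g₁)
    (x : S) : ∃ k, (glue S w g₁ m g₂)^[k] x = w := by
  obtain ⟨n, hn⟩ := h₁.exists_iterate_eq_root x
  refine exists_iterate_eq_of_forall_ne (fun u hu => ?_) hn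
  rw [glue_of_mem u.2, if_neg fun h => hu (Subtype.ext h)]

theorem isBipartiteParentMap_glue (hw : w ∈ S) (hz : z ∉ S) (hm : m ∉ S)
    (hmw : side m = !side w) (h₁ : IsBipartiteParentMap (fun x : S => side x) ⟨w, hw⟩ g₁)
    (h₂ : IsBipartiteParentMap (fun x : {v // v ∉ S} => side x) ⟨z, hz⟩ g₂) :
    IsBipartiteParentMap side z (glue S w g₁ m g₂) where
  map_root := by rw [← semiconj_glue ⟨z, hz⟩, h₂.map_root]
  side_map v hv := by
    by_cases hvS : v ∈ S
    · rw [glue_of_mem hvS]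
      split_ifs with hvw
      · rw [hmw, hvw]
      · exact h₁.side_map ⟨v, hvS⟩ fun h => hvw (congrArg Subtype.val h)
    · rw [← semiconj_glue ⟨v, hvS⟩]
      exact h₂.side_map ⟨v, hvS⟩ fun h => hv (congrArg Subtype.val h)
  exists_iterate_eq_root v := by
    have hreach (y : {v // v ∉ S}) : ∃ n, (glue S w g₁ m g₂)^[n] y = z := by
      obtain ⟨n, hn⟩ := h₂.exists_iterate_eq_root y
      exact ⟨n, by rw [← semiconj_glue.iterate_right n y, hn]⟩
    by_cases hvS : v ∈ S
    · obtain ⟨k, hk⟩ := exists_iterate_glue_eq hw h₁ ⟨v, hvS⟩ (m := m) (g₂ := g₂)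
      obtain ⟨n, hn⟩ := hreach ⟨m, hm⟩
      refine ⟨n + 1 + k, ?_⟩
      rw [iterate_add_apply, hk, iterate_succ_apply, glue_of_mem hw, if_pos rfl, hn]
    · exact hreach ⟨v, hvS⟩

theorem exists_iterate_glue_eq_iff (hw : w ∈ S)
    (h₁ : IsBipartiteParentMap (fun x : S => side x) ⟨w, hw⟩ g₁) (v : γ) :
    (∃ n, (glue S w g₁ m g₂)^[n] v = w) ↔ v ∈ S := by
  refine ⟨fun ⟨n, hn⟩ => ?_, fun hv => exists_iterate_glue_eq hw h₁ ⟨v, hv⟩⟩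
  by_contra hv
  rw [← (semiconj_glue.iterate_right n ⟨v, hv⟩ :)] at hn
  exact (g₂^[n] ⟨v, hv⟩).2 (hn ▸ hw)

end Glue

section Subtree

variable {γ : Type*} [Fintype γ] {side : γ → Bool} {f : γ → γ} {v w z : γ}

open Classical in
noncomputable def subtree (f : γ → γ) (w : γ) : Finset γ := {v | ∃ n, f^[n] v = w}

theorem mem_subtree : v ∈ subtree f w ↔ ∃ n, f^[n] v = w := by
  simp [subtree]

theorem mem_subtree_self (f : γ → γ) (w : γ) : w ∈ subtree f w := mem_subtree.2 ⟨0, rfl⟩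

theorem map_mem_subtree (hv : v ∈ subtree f w) (hvw : v ≠ w) : f v ∈ subtree f w := by
  obtain ⟨n, hn⟩ := mem_subtree.1 hv
  cases n with
  | zero => exact absurd hn hvw
  | succ n => exact mem_subtree.2 ⟨n, hn⟩

theorem map_notMem_subtree (hv : v ∉ subtree f w) : f v ∉ subtree f w := fun h => by
  obtain ⟨n, hn⟩ := mem_subtree.1 h
  exact hv (mem_subtree.2 ⟨n + 1, hn⟩)

namespace IsBipartiteParentMap

theorem root_notMem_subtree (hf : IsBipartiteParentMap side z f) (hwz : w ≠ z) :
    z ∉ subtree f w := fun h => by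
  obtain ⟨n, hn⟩ := mem_subtree.1 h
  exact hwz (by rw [← hn, iterate_fixed hf.map_root])

theorem map_notMem_subtree_self (hf : IsBipartiteParentMap side z f) (hwz : w ≠ z) :
    f w ∉ subtree f w := fun h => by
  obtain ⟨n, hn⟩ := mem_subtree.1 h
  refine hwz (hf.eq_root_of_isPeriodicPt n.succ_pos ?_)
  rwa [IsPeriodicPt, IsFixedPt, iterate_succ_apply]

end IsBipartiteParentMap

end Subtree

section Cut

variable {γ : Type*} [DecidableEq γ] (side : γ → Bool) (c : Bool)

def MarkedTree : Type _ :=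
  Σ z : {v // side v = true}, {w // side w = c ∧ w ≠ z.1} × BipartiteParentMap side z.1

/-- The two pieces of a `MarkedTree` cut above its mark, on the vertex sets `S` and `Sᶜ`: the
subtree rooted at the mark, and the rest, keeping the root and marked at the parent of the mark. -/
def CutTree (S : Finset γ) : Type _ :=
  (Σ w : {x : S // side x = c}, BipartiteParentMap (fun x : S => side x) w.1) ×
  (Σ z : {x : {v // v ∉ S} // side x = true},
    {m : {v // v ∉ S} // side m = !c} × BipartiteParentMap (fun x : {v // v ∉ S} => side x) z.1)

def glueCutTree : (Σ S : Finset γ, CutTree side c S) → MarkedTree side c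
  | ⟨S, ⟨w, g₁⟩, ⟨z, m, g₂⟩⟩ =>
    ⟨⟨z.1.1, z.2⟩, ⟨w.1.1, w.2, fun h => z.1.2 (h ▸ w.1.2)⟩,
      ⟨glue S w.1.1 g₁.1 m.1.1 g₂.1,
        isBipartiteParentMap_glue w.1.2 z.1.2 m.1.2 (by rw [m.2, w.2]) g₁.2 g₂.2⟩⟩

theorem glueCutTree_injective : Injective (glueCutTree side c) := by
  rintro ⟨S, ⟨⟨⟨w, hwS⟩, hw⟩, g₁, h₁⟩, ⟨⟨⟨z, hzS⟩, hz⟩, ⟨⟨m, hmS⟩, hm⟩, g₂, h₂⟩⟩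
    ⟨S', ⟨⟨⟨w', hwS'⟩, hw'⟩, g₁', h₁'⟩, ⟨⟨⟨z', hzS'⟩, hz'⟩, ⟨⟨m', hmS'⟩, hm'⟩, g₂', h₂'⟩⟩ h
  obtain ⟨hz, h⟩ := Sigma.mk.inj_iff.mp h
  obtain rfl : z = z' := congrArg Subtype.val hz
  obtain rfl : w = w' := congrArg (fun t => t.1.1) (eq_of_heq h)
  have hF : glue S w g₁ m g₂ = glue S' w g₁' m' g₂' := congrArg (fun t => t.2.1) (eq_of_heq h)
  obtain rfl : S = S' := by
    ext v
    rw [← exists_iterate_glue_eq_iff hwS h₁ v, hF, exists_iterate_glue_eq_iff hwS' h₁' v]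
  obtain rfl : m = m' := by simpa [glue_of_mem hwS] using congrFun hF w
  obtain rfl : g₁ = g₁' := funext fun x => Subtype.ext <| by
    by_cases hx : x = ⟨w, hwS⟩
    · rw [hx, h₁.map_root, h₁'.map_root]
    · have hx' : x.1 ≠ w := fun h => hx (Subtype.ext h)
      simpa [glue_of_mem x.2, hx'] using congrFun hF x
  obtain rfl : g₂ = g₂' := funext fun y => Subtype.ext <| by
    rw [semiconj_glue y, semiconj_glue y, hF]
  rfl

theorem glueCutTree_surjective [Fintype γ] : Surjective (glueCutTree side c) := by
  rintro ⟨⟨z, hz⟩, ⟨w, hw, hwz⟩, f, hf⟩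
  dsimp only at hwz hf
  have hwS := mem_subtree_self f w
  have hzS := hf.root_notMem_subtree hwz
  have hS (v : γ) (hv : v ∈ subtree f w) : update f w w v ∈ subtree f w := by
    by_cases hvw : v = w
    · rwa [hvw, update_self]
    · rw [update_of_ne hvw]
      exact map_mem_subtree hv hvw
  have hSc (v : γ) (hv : v ∉ subtree f w) : f v ∉ subtree f w := map_notMem_subtree hv
  have h₁ := isBipartiteParentMap_subtypeMap (side := side) hS hwS (update_self _ _ _)
    (fun v hv hvw => by rw [update_of_ne hvw, hf.side_map v fun h => hzS (h ▸ hv)])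
    (fun v hv => by
      obtain ⟨n, hn⟩ := mem_subtree.1 hv
      exact exists_iterate_eq_of_forall_ne (φ := id) (fun u hu => update_of_ne hu w f) hn)
  have h₂ := isBipartiteParentMap_subtypeMap (side := side) hSc hzS hf.map_root
    (fun v _ hvz => hf.side_map v hvz) (fun v _ => hf.exists_iterate_eq_root v)
  have hglue : glue (subtree f w) w (Subtype.map (update f w w) hS) (f w)
      (Subtype.map f hSc) = f := by
    funext v
    by_cases hv : v ∈ subtree f w
    · by_cases hvw : v = w
      · rw [hvw, glue_of_mem hwS, if_pos rfl]
      · simp [glue_of_mem hv, hvw, Subtype.map]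
    · exact (semiconj_glue ⟨v, hv⟩).symm
  refine ⟨⟨subtree f w, ⟨⟨⟨w, hwS⟩, hw⟩, _, h₁⟩, ⟨⟨⟨z, hzS⟩, hz⟩,
    ⟨⟨f w, hf.map_notMem_subtree_self hwz⟩, by rw [hf.side_map w hwz, hw]⟩, _, h₂⟩⟩, ?_⟩
  simp only [glueCutTree, hglue]
  rfl

end Cut

section Count

variable {γ : Type*} (side : γ → Bool)

theorem card_sigma_of_card_eq {ι : Type*} [Fintype ι] {β : ι → Type*} [∀ i, Finite (β i)] {n : ℕ}
    (h : ∀ i, Nat.card (β i) = n) : Nat.card (Σ i, β i) = Nat.card ι * n := by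
  rw [Nat.card_sigma, sum_congr rfl fun i _ => h i, sum_const, card_univ, smul_eq_mul,
    Nat.card_eq_fintype_card]

theorem card_side_mem (S : Finset γ) (b : Bool) :
    Nat.card {x : S // side x = b} = #{x ∈ S | side x = b} := by
  rw [Nat.card_congr (Equiv.subtypeSubtypeEquivSubtypeInter (· ∈ S) (side · = b))]
  exact Nat.subtype_card _ fun x => by simp

theorem card_bipartiteParentMap_mem (S : Finset γ) (z : S) :
    Nat.card (BipartiteParentMap (fun x : S => side x) z) =
      Nbi #{x ∈ S | side x = true} #{x ∈ S | side x = false} 0 := by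
  rw [card_bipartiteParentMap, card_side_mem, card_side_mem]

variable [Fintype γ] [DecidableEq γ]

theorem card_side_notMem (S : Finset γ) (b : Bool) :
    Nat.card {x : {v // v ∉ S} // side x = b} =
      Nat.card {v // side v = b} - #{x ∈ S | side x = b} := by
  rw [Nat.card_congr (Equiv.subtypeSubtypeEquivSubtypeInter (· ∉ S) (side · = b)),
    Nat.subtype_card (({v | side v = b} : Finset γ) \ S) fun x => by simp [and_comm],
    Nat.subtype_card ({v | side v = b} : Finset γ) fun x => by simp, card_sdiff]
  congr 2
  ext
  simp [and_comm]

theorem card_bipartiteParentMap_notMem (S : Finset γ) (z : {v // v ∉ S}) :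
    Nat.card (BipartiteParentMap (fun x : {v // v ∉ S} => side x) z) =
      Nbi (Nat.card {v // side v = true} - #{x ∈ S | side x = true})
        (Nat.card {v // side v = false} - #{x ∈ S | side x = false}) 0 := by
  rw [card_bipartiteParentMap, card_side_notMem, card_side_notMem]

instance (c : Bool) : Finite (MarkedTree side c) := by unfold MarkedTree; infer_instance

instance (c : Bool) (S : Finset γ) : Finite (CutTree side c S) := by unfold CutTree; infer_instance

theorem card_markedTree (c : Bool) :
    Nat.card (MarkedTree side c) = Nat.card {v // side v = true} *
      ((if c then Nat.card {v // side v = true} - 1 else Nat.card {v // side v = false}) *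
        Nbi (Nat.card {v // side v = true}) (Nat.card {v // side v = false}) 0) := by
  refine card_sigma_of_card_eq fun z => ?_
  have hcard (b : Bool) : Nat.card {v // side v = b} = #{v | side v = b} :=
    Nat.subtype_card _ fun x => by simp
  rw [Nat.card_prod, card_bipartiteParentMap, hcard, hcard,
    Nat.subtype_card (({v | side v = c} : Finset γ).erase z) fun x => by simp [and_comm],
    card_erase_eq_ite]
  cases c <;> simp [z.2]

theorem card_cutTree (c : Bool) (S : Finset γ) :
    Nat.card (CutTree side c S) =
      (if c then #{x ∈ S | side x = true} else #{x ∈ S | side x = false}) *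
        Nbi #{x ∈ S | side x = true} #{x ∈ S | side x = false} 0 *
      ((Nat.card {v // side v = true} - #{x ∈ S | side x = true}) *
        ((if c then Nat.card {v // side v = false} - #{x ∈ S | side x = false}
          else Nat.card {v // side v = true} - #{x ∈ S | side x = true}) *
        Nbi (Nat.card {v // side v = true} - #{x ∈ S | side x = true})
          (Nat.card {v // side v = false} - #{x ∈ S | side x = false}) 0)) := by
  rw [CutTree, Nat.card_prod,
    card_sigma_of_card_eq fun w : {x : S // side x = c} => card_bipartiteParentMap_mem side S w.1,
    card_sigma_of_card_eq fun z : {x : {v // v ∉ S} // side x = true} => by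
      rw [Nat.card_prod, card_bipartiteParentMap_notMem side S z.1],
    card_side_mem, card_side_notMem, card_side_notMem]
  cases c <;> rfl

theorem card_markedTree_eq_sum (c : Bool) :
    Nat.card (MarkedTree side c) = ∑ S : Finset γ, Nat.card (CutTree side c S) := by
  rw [← Nat.card_sigma]
  exact (Nat.card_eq_of_bijective _
    ⟨glueCutTree_injective side c, glueCutTree_surjective side c⟩).symm

end Count

section Identities

theorem sum_finset_eq_sum_choose {γ : Type*} [Fintype γ] [DecidableEq γ] (side : γ → Bool)
    {M : Type*} [AddCommMonoid M] (F : ℕ → ℕ → M) :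
    ∑ S : Finset γ, F #{x ∈ S | side x = true} #{x ∈ S | side x = false} =
      ∑ k ∈ range (Nat.card {v // side v = true} + 1),
        ∑ l ∈ range (Nat.card {v // side v = false} + 1),
          ((Nat.card {v // side v = true}).choose k * (Nat.card {v // side v = false}).choose l) •
            F k l := by
  set P : Finset γ := {v | side v = true}
  set Q : Finset γ := {v | side v = false}
  have hP : Nat.card {v // side v = true} = #P := Nat.subtype_card _ fun x => by simp [P]
  have hQ : Nat.card {v // side v = false} = #Q := Nat.subtype_card _ fun x => by simp [Q]
  calc ∑ S : Finset γ, F #{x ∈ S | side x = true} #{x ∈ S | side x = false}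
      = ∑ p ∈ P.powerset ×ˢ Q.powerset, F #p.1 #p.2 := by
        refine sum_nbij' (fun S => ({x ∈ S | side x = true}, {x ∈ S | side x = false}))
          (fun p => p.1 ∪ p.2) (fun S _ => ?_) (fun _ _ => mem_univ _) (fun S _ => ?_)
          (fun p hp => ?_) (fun _ _ => rfl)
        · simp only [mem_product, mem_powerset]
          exact ⟨monotone_filter_left _ (subset_univ S), monotone_filter_left _ (subset_univ S)⟩
        · ext x
          cases h : side x <;> simp [h]
        · simp only [mem_product, mem_powerset] at hp
          ext x <;> grind
    _ = ∑ A ∈ P.powerset, ∑ l ∈ range (#Q + 1), (#Q).choose l • F #A l := by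
        rw [sum_product]
        exact sum_congr rfl fun A _ => sum_powerset_apply_card (F #A)
    _ = _ := by
        rw [sum_powerset_apply_card (fun k => ∑ l ∈ range (#Q + 1), (#Q).choose l • F k l), hP, hQ]
        simp only [smul_sum, mul_smul]

theorem mul_mark_mul_nbi_eq_sum (r s : ℕ) (c : Bool) :
    r * ((if c then r - 1 else s) * Nbi r s 0) =
      ∑ p ∈ antidiagonal r, ∑ q ∈ antidiagonal s, r.choose p.1 * s.choose q.1 *
        ((if c then p.1 else q.1) * Nbi p.1 q.1 0) *
        (p.2 * ((if c then q.2 else p.2) * Nbi p.2 q.2 0)) := by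
  have hr : Nat.card {v : Fin r ⊕ Fin s // v.isLeft = true} = r := by
    rw [Nat.card_congr Equiv.sumIsLeft, Nat.card_eq_fintype_card, Fintype.card_fin]
  have hs : Nat.card {v : Fin r ⊕ Fin s // v.isLeft = false} = s := by
    rw [Nat.card_congr ((Equiv.subtypeEquivRight fun v => by simp).trans Equiv.sumIsRight),
      Nat.card_eq_fintype_card, Fintype.card_fin]
  have key := (card_markedTree (Sum.isLeft : Fin r ⊕ Fin s → Bool) c).symm.trans <|
    (card_markedTree_eq_sum _ c).trans (sum_congr rfl fun S _ => card_cutTree _ c S)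
  rw [hr, hs, sum_finset_eq_sum_choose _ fun k l => (if c then k else l) * Nbi k l 0 *
    ((r - k) * ((if c then s - l else r - k) * Nbi (r - k) (s - l) 0)), hr, hs] at key
  rw [key, Nat.sum_antidiagonal_eq_sum_range_succ_mk]
  refine sum_congr rfl fun k _ => ?_
  rw [Nat.sum_antidiagonal_eq_sum_range_succ_mk]
  refine sum_congr rfl fun l _ => ?_
  cases c <;> simp only [smul_eq_mul] <;> ring

theorem mul_mul_nbi_eq_sum (r s : ℕ) :
    r * s * Nbi r s 0 = ∑ p ∈ antidiagonal r, ∑ q ∈ antidiagonal s,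
      r.choose p.1 * s.choose q.1 * (q.1 * Nbi p.1 q.1 0) * (p.2 * p.2 * Nbi p.2 q.2 0) := by
  simpa [mul_assoc] using mul_mark_mul_nbi_eq_sum r s false

theorem mul_sub_one_mul_nbi_eq_sum (r s : ℕ) :
    r * (r - 1) * Nbi r s 0 = ∑ p ∈ antidiagonal r, ∑ q ∈ antidiagonal s,
      r.choose p.1 * s.choose q.1 * (p.1 * Nbi p.1 q.1 0) * (p.2 * q.2 * Nbi p.2 q.2 0) := by
  simpa [mul_assoc] using mul_mark_mul_nbi_eq_sum r s true

end Identities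

section EGF

noncomputable def egf₂ (a : ℕ → ℕ → ℚ) : MvPowerSeries (Fin 2) ℚ :=
  fun m => a (m 0) (m 1) / ((m 0).factorial * (m 1).factorial)

theorem sum_antidiagonal_fin_two {M : Type*} [AddCommMonoid M] (m : Fin 2 →₀ ℕ)
    (F : ℕ → ℕ → ℕ → ℕ → M) :
    ∑ p ∈ antidiagonal m, F (p.1 0) (p.1 1) (p.2 0) (p.2 1) =
      ∑ p ∈ antidiagonal (m 0), ∑ q ∈ antidiagonal (m 1), F p.1 q.1 p.2 q.2 := by
  have ext_fin_two {x y : Fin 2 →₀ ℕ} (h₀ : x 0 = y 0) (h₁ : x 1 = y 1) : x = y :=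
    Finsupp.ext fun i => by fin_cases i <;> assumption
  rw [← sum_product']
  refine sum_nbij' (fun p => ((p.1 0, p.2 0), (p.1 1, p.2 1)))
    (fun q => (Finsupp.single 0 q.1.1 + Finsupp.single 1 q.2.1,
      Finsupp.single 0 q.1.2 + Finsupp.single 1 q.2.2)) ?_ ?_ ?_ ?_ (fun _ _ => rfl)
  · rintro ⟨p₁, p₂⟩ hp
    simp only [HasAntidiagonal.mem_antidiagonal, mem_product] at hp ⊢
    exact ⟨by simp [← hp], by simp [← hp]⟩
  · rintro ⟨⟨a₁, a₂⟩, ⟨b₁, b₂⟩⟩ hq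
    simp only [HasAntidiagonal.mem_antidiagonal, mem_product] at hq ⊢
    exact ext_fin_two (by simp [← hq.1]) (by simp [← hq.2])
  · rintro ⟨p₁, p₂⟩ -
    simp only [Prod.mk.injEq]
    exact ⟨ext_fin_two (by simp) (by simp), ext_fin_two (by simp) (by simp)⟩
  · rintro ⟨⟨a₁, a₂⟩, ⟨b₁, b₂⟩⟩ -
    simp

theorem egf₂_add (a b : ℕ → ℕ → ℚ) : egf₂ a + egf₂ b = egf₂ fun r s => a r s + b r s :=
  funext fun _ => (add_div _ _ _).symm

theorem egf₂_mul (a b : ℕ → ℕ → ℚ) :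
    egf₂ a * egf₂ b = egf₂ fun r s => ∑ p ∈ antidiagonal r, ∑ q ∈ antidiagonal s,
      r.choose p.1 * s.choose q.1 * a p.1 q.1 * b p.2 q.2 := by
  ext m
  rw [MvPowerSeries.coeff_mul]
  refine (sum_antidiagonal_fin_two m fun r₁ s₁ r₂ s₂ =>
    a r₁ s₁ / (r₁.factorial * s₁.factorial) * (b r₂ s₂ / (r₂.factorial * s₂.factorial))).trans ?_
  simp only [egf₂, MvPowerSeries.coeff_apply, sum_div]
  refine sum_congr rfl fun p hp => sum_congr rfl fun q hq => ?_
  rw [HasAntidiagonal.mem_antidiagonal] at hp hq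
  rw [← hp, ← hq, Nat.cast_choose ℚ (Nat.le_add_right _ _),
    Nat.cast_choose ℚ (Nat.le_add_right _ _), Nat.add_sub_cancel_left, Nat.add_sub_cancel_left]
  field_simp

end EGF

/-- `T_xy·(1 - T_x·T_y) = T_x·T_y` as formal power series. -/
theorem stmt9 : Txy * (1 - Tx * Ty) = Tx * Ty := by
  have hTx : Tx = egf₂ fun r s => r * Nbi r s 0 := rfl
  have hTy : Ty = egf₂ fun r s => s * Nbi r s 0 := rfl
  have hTxy : Txy = egf₂ fun r s => r * s * Nbi r s 0 := rfl
  have hcut₁ : Txy = Ty * egf₂ fun r s => r * r * Nbi r s 0 := by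
    rw [hTxy, hTy, egf₂_mul]
    congr with r s
    exact_mod_cast mul_mul_nbi_eq_sum r s
  have hcut₂ : (egf₂ fun r s => r * r * Nbi r s 0) = Tx + Tx * Txy := by
    rw [hTx, hTxy, egf₂_mul, egf₂_add]
    congr with r s
    have hr : (r : ℚ) * r = r + r * (r - 1 : ℕ) := by cases r <;> push_cast <;> ring
    rw [hr, add_mul]
    congr 1
    exact_mod_cast mul_sub_one_mul_nbi_eq_sum r s
  linear_combination hcut₁ + Ty * hcut₂
end

section
/- For every integer n ≥ 2: ∑_{r=1}^{n-1} C(n,r)·r^{n-r-1}·(n-r)^{r-1} = 2·n^{n-2}. -/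
open Finset

/-- `H n x y = ∑_{k=0}^{n} C(n,k) (x+k)^{n-k} (y+n-k)^k`. -/
def auxH (n x y : ℕ) : ℕ :=
  ∑ k ∈ Finset.range (n + 1), n.choose k * (x + k) ^ (n - k) * (y + (n - k)) ^ k

/-- `G n x y = ∑_{k=1}^{n} C(n,k) (x+k)^{n-k} (y+n-k)^{k-1}`. -/
def auxG (n x y : ℕ) : ℕ :=
  ∑ j ∈ Finset.range n, n.choose (j + 1) * (x + (j + 1)) ^ (n - (j + 1)) * (y + (n - (j + 1))) ^ j

lemma auxR1 (n x y : ℕ) :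
    auxH (n + 1) x y + (n + 1) * auxH n (x + 1) y
      = x ^ (n + 1) + (y + (n + 1)) * auxG (n + 1) x y := by
  have key : ∑ j ∈ Finset.range (n + 1),
      ((n + 1).choose (j + 1) * (x + (j + 1)) ^ (n - j) * (y + (n - j)) ^ (j + 1)
        + (n + 1) * (n.choose j * (x + 1 + j) ^ (n - j) * (y + (n - j)) ^ j))
      = ∑ j ∈ Finset.range (n + 1),
        (y + (n + 1)) * ((n + 1).choose (j + 1) * (x + (j + 1)) ^ (n - j) * (y + (n - j)) ^ j) := by
    apply Finset.sum_congr rfl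
    intro j hj
    have hj' : j ≤ n := Nat.lt_succ_iff.mp (Finset.mem_range.mp hj)
    obtain ⟨d, rfl⟩ : ∃ d, n = j + d := ⟨n - j, by omega⟩
    have h1 : j + d - j = d := by omega
    have h2 : (j + d + 1) * (j + d).choose j = (j + d + 1).choose (j + 1) * (j + 1) :=
      Nat.add_one_mul_choose_eq (j + d) j
    rw [h1]
    calc (j + d + 1).choose (j + 1) * (x + (j + 1)) ^ d * (y + d) ^ (j + 1) +
        (j + d + 1) * ((j + d).choose j * (x + 1 + j) ^ d * (y + d) ^ j)
        = ((j + d + 1) * (j + d).choose j) * ((x + 1 + j) ^ d * (y + d) ^ j)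
          + (j + d + 1).choose (j + 1) * (x + (j + 1)) ^ d * (y + d) ^ (j + 1) := by ring
      _ = ((j + d + 1).choose (j + 1) * (j + 1)) * ((x + 1 + j) ^ d * (y + d) ^ j)
          + (j + d + 1).choose (j + 1) * (x + (j + 1)) ^ d * (y + d) ^ (j + 1) := by rw [h2]
      _ = (y + (j + d + 1)) * ((j + d + 1).choose (j + 1) * (x + (j + 1)) ^ d * (y + d) ^ j) := by
          have e : x + 1 + j = x + (j + 1) := by ring
          rw [e]; ring
  unfold auxH auxG
  rw [Finset.sum_range_succ' (fun k => (n + 1).choose k * (x + k) ^ (n + 1 - k) * (y + (n + 1 - k)) ^ k) (n + 1)]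
  simp only [Nat.succ_sub_succ]
  rw [Finset.mul_sum, Finset.mul_sum]
  rw [add_right_comm, ← Finset.sum_add_distrib, key]
  simp [add_comm]

lemma auxR2 (n x y : ℕ) :
    auxG (n + 1) x y + auxH n x (y + 1)
      = auxH n (x + 1) y + (x + y + (n + 1)) * auxG n x (y + 1) + x ^ n := by
  have hG : auxG (n + 1) x y
      = (∑ j ∈ Finset.range (n + 1), n.choose j * (x + (j + 1)) ^ (n - j) * (y + (n - j)) ^ j)
        + ∑ j ∈ Finset.range (n + 1),
            n.choose (j + 1) * (x + (j + 1)) ^ (n - j) * (y + (n - j)) ^ j := by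
    unfold auxG
    rw [← Finset.sum_add_distrib]
    apply Finset.sum_congr rfl
    intro j hj
    simp only [Nat.succ_sub_succ]
    rw [Nat.choose_succ_succ]
    ring
  have hA : (∑ j ∈ Finset.range (n + 1), n.choose j * (x + (j + 1)) ^ (n - j) * (y + (n - j)) ^ j)
      = auxH n (x + 1) y := by
    unfold auxH
    apply Finset.sum_congr rfl
    intro j hj
    have : x + (j + 1) = x + 1 + j := by ring
    rw [this]
  have hHsplit : auxH n x (y + 1)
      = (∑ j ∈ Finset.range n,
          n.choose (j + 1) * (x + (j + 1)) ^ (n - (j + 1)) * (y + 1 + (n - (j + 1))) ^ (j + 1))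
        + x ^ n := by
    unfold auxH
    rw [Finset.sum_range_succ' (fun k => n.choose k * (x + k) ^ (n - k) * (y + 1 + (n - k)) ^ k) n]
    simp
  have hB : (∑ j ∈ Finset.range (n + 1),
        n.choose (j + 1) * (x + (j + 1)) ^ (n - j) * (y + (n - j)) ^ j)
      + ∑ j ∈ Finset.range n,
          n.choose (j + 1) * (x + (j + 1)) ^ (n - (j + 1)) * (y + 1 + (n - (j + 1))) ^ (j + 1)
      = (x + y + (n + 1)) * auxG n x (y + 1) := by
    unfold auxG
    rw [Finset.sum_range_succ, Nat.choose_succ_self]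
    simp only [zero_mul, mul_zero, zero_mul, add_zero]
    rw [Finset.mul_sum, ← Finset.sum_add_distrib]
    apply Finset.sum_congr rfl
    intro j hj
    have hj' : j < n := Finset.mem_range.mp hj
    obtain ⟨d, rfl⟩ : ∃ d, n = j + 1 + d := ⟨n - (j + 1), by omega⟩
    have h1 : j + 1 + d - j = d + 1 := by omega
    have h2 : j + 1 + d - (j + 1) = d := by omega
    rw [h1, h2]
    ring
  calc auxG (n + 1) x y + auxH n x (y + 1)
      = auxH n (x + 1) y
        + ((∑ j ∈ Finset.range (n + 1),
            n.choose (j + 1) * (x + (j + 1)) ^ (n - j) * (y + (n - j)) ^ j)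
          + ∑ j ∈ Finset.range n,
              n.choose (j + 1) * (x + (j + 1)) ^ (n - (j + 1)) * (y + 1 + (n - (j + 1))) ^ (j + 1))
        + x ^ n := by rw [hG, hA, hHsplit]; ring
    _ = auxH n (x + 1) y + (x + y + (n + 1)) * auxG n x (y + 1) + x ^ n := by rw [hB]

lemma auxTS (n : ℕ) :
    (∀ x y : ℕ, (y + n) * auxG n x y + x ^ n = (x + y + n) ^ n) ∧
    (∀ x y x' y' : ℕ, x + y = x' + y' → auxH n x y = auxH n x' y') := by
  induction n with
  | zero =>
    constructor
    · intro x y; simp [auxG]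
    · intro x y x' y' h; simp [auxH]
  | succ n ih =>
    obtain ⟨hT, hS⟩ := ih
    have hT' : ∀ x y : ℕ,
        (y + (n + 1)) * auxG (n + 1) x y + x ^ (n + 1) = (x + y + (n + 1)) ^ (n + 1) := by
      intro x y
      have h2 := auxR2 n x y
      have h3 : auxH n (x + 1) y = auxH n x (y + 1) := hS _ _ _ _ (by ring)
      rw [h3] at h2
      have hGrec : auxG (n + 1) x y = (x + y + (n + 1)) * auxG n x (y + 1) + x ^ n := by
        linarith
      have h4 := hT x (y + 1)
      have key : (y + (n + 1)) * auxG (n + 1) x y + x ^ (n + 1) + (x + y + (n + 1)) * x ^ n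
          = (x + y + (n + 1)) ^ (n + 1) + (x + y + (n + 1)) * x ^ n := by
        calc (y + (n + 1)) * auxG (n + 1) x y + x ^ (n + 1) + (x + y + (n + 1)) * x ^ n
            = (x + y + (n + 1)) * ((y + 1 + n) * auxG n x (y + 1) + x ^ n)
              + (x + y + (n + 1)) * x ^ n := by rw [hGrec]; ring
          _ = (x + y + (n + 1)) * (x + (y + 1) + n) ^ n + (x + y + (n + 1)) * x ^ n := by
              rw [h4]
          _ = (x + y + (n + 1)) ^ (n + 1) + (x + y + (n + 1)) * x ^ n := by ring
      exact Nat.add_right_cancel key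
    refine ⟨hT', ?_⟩
    intro x y x' y' h
    have e : ∀ a b : ℕ,
        auxH (n + 1) a b + (n + 1) * auxH n (a + 1) b = (a + b + (n + 1)) ^ (n + 1) := by
      intro a b
      have r1 := auxR1 n a b
      have t := hT' a b
      linarith
    have e1 := e x y
    have e2 := e x' y'
    have hs : auxH n (x + 1) y = auxH n (x' + 1) y' := hS _ _ _ _ (by omega)
    have hpow : (x + y + (n + 1)) ^ (n + 1) = (x' + y' + (n + 1)) ^ (n + 1) := by rw [h]
    rw [hpow, ← e2, hs] at e1
    exact Nat.add_right_cancel e1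

lemma auxV (n : ℕ) (hn : 2 ≤ n) :
    ∑ r ∈ Finset.Ico 1 n, n.choose r * r ^ (n - r) * (n - r) ^ (r - 1) = n ^ (n - 1) := by
  have hT := (auxTS n).1 0 0
  have h0 : (0 : ℕ) ^ n = 0 := zero_pow (by omega)
  have hG : n * auxG n 0 0 = n ^ n := by simpa [h0] using hT
  have hGv : auxG n 0 0 = ∑ r ∈ Finset.Ico 1 n, n.choose r * r ^ (n - r) * (n - r) ^ (r - 1) := by
    unfold auxG
    rw [Finset.sum_Ico_eq_sum_range]
    obtain ⟨m, rfl⟩ : ∃ m, n = m + 1 := ⟨n - 1, by omega⟩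
    rw [Finset.sum_range_succ]
    have hm : 1 ≤ m := by omega
    have hlast : (m + 1).choose (m + 1) * ((0 : ℕ) + (m + 1)) ^ (m + 1 - (m + 1))
        * ((0 : ℕ) + (m + 1 - (m + 1))) ^ m = 0 := by
      simp [Nat.sub_self, zero_pow (by omega : m ≠ 0)]
    rw [hlast, add_zero]
    have hmm : m + 1 - 1 = m := by omega
    rw [hmm]
    apply Finset.sum_congr rfl
    intro j hj
    have h1 : 1 + j = j + 1 := by omega
    have h2 : j + 1 - 1 = j := by omega
    rw [h1, h2]
    simp
  rw [hGv] at hG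
  have hpow : n ^ n = n * n ^ (n - 1) := by
    rw [mul_comm, ← pow_succ]
    congr 1
    omega
  exact Nat.eq_of_mul_eq_mul_left (by omega) (hG.trans hpow)

/-- For every `n ≥ 2`: `∑_{r=1}^{n-1} C(n,r)·r^{n-r-1}·(n-r)^{r-1} = 2·n^{n-2}`. -/
theorem stmt11 (n : ℕ) (hn : 2 ≤ n) :
    ∑ r ∈ Finset.Ico 1 n, n.choose r * r ^ (n - r - 1) * (n - r) ^ (r - 1) =
      2 * n ^ (n - 2) := by
  apply Nat.eq_of_mul_eq_mul_left (show 0 < n by omega)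
  rw [Finset.mul_sum]
  have split : ∀ r ∈ Finset.Ico 1 n,
      n * (n.choose r * r ^ (n - r - 1) * (n - r) ^ (r - 1))
        = n.choose r * r ^ (n - r) * (n - r) ^ (r - 1)
          + n.choose r * r ^ (n - r - 1) * (n - r) ^ r := by
    intro r hr
    rw [Finset.mem_Ico] at hr
    obtain ⟨h1, h2⟩ := hr
    have e1 : r ^ (n - r) = r ^ (n - r - 1) * r := by
      rw [← pow_succ]; congr 1; omega
    have e2 : (n - r) ^ r = (n - r) ^ (r - 1) * (n - r) := by
      rw [← pow_succ]; congr 1; omega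
    have e3 : r + (n - r) = n := by omega
    calc n * (n.choose r * r ^ (n - r - 1) * (n - r) ^ (r - 1))
        = (r + (n - r)) * (n.choose r * r ^ (n - r - 1) * (n - r) ^ (r - 1)) := by rw [e3]
      _ = n.choose r * (r ^ (n - r - 1) * r) * (n - r) ^ (r - 1)
          + n.choose r * r ^ (n - r - 1) * ((n - r) ^ (r - 1) * (n - r)) := by ring
      _ = _ := by rw [← e1, ← e2]
  rw [Finset.sum_congr rfl split, Finset.sum_add_distrib]
  have hA : ∑ r ∈ Finset.Ico 1 n, n.choose r * r ^ (n - r) * (n - r) ^ (r - 1) = n ^ (n - 1) :=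
    auxV n hn
  have hB : ∑ r ∈ Finset.Ico 1 n, n.choose r * r ^ (n - r - 1) * (n - r) ^ r = n ^ (n - 1) := by
    rw [← hA]
    apply Finset.sum_nbij' (fun r => n - r) (fun r => n - r)
    · intro a ha; rw [Finset.mem_Ico] at *; omega
    · intro a ha; rw [Finset.mem_Ico] at *; omega
    · intro a ha; rw [Finset.mem_Ico] at ha; omega
    · intro a ha; rw [Finset.mem_Ico] at ha; omega
    · intro a ha
      rw [Finset.mem_Ico] at ha
      obtain ⟨h1, h2⟩ := ha
      have hc' : n.choose (n - a) = n.choose a := Nat.choose_symm (by omega)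
      have r1 : n - (n - a) = a := by omega
      rw [hc', r1]
      ring
  rw [hA, hB]
  have : n ^ (n - 1) = n ^ (n - 2) * n := by
    rw [← pow_succ]; congr 1; omega
  rw [this]; ring
end

section
/- Define w : ℕ → ℚ by w_0 = 0 and w_n = 2(n-1)n^{n-2} for n ≥ 1, and define the iterated convolutions w^{*1}_n = w_n and w^{*(k+1)}_n = ∑_{r=0}^{n} C(n,r)·w^{*k}_r·w_{n-r}. Then for all integers n ≥ 2 and all k with 1 ≤ k ≤ n/2: w^{*k}_n = 2k·(2k)!·n^{n-2k-1}·C(n,2k), where n^{n-2k-1} is interpreted in ℚ (so equal to 1/n when 2k = n). -/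
/-- `w_0 = 0` and `w_n = 2(n-1)n^{n-2}` for `n ≥ 1`. -/
noncomputable def wseq (n : ℕ) : ℚ :=
  if n = 0 then 0 else 2 * ((n : ℚ) - 1) * (n : ℚ) ^ (n - 2)

/-- Iterated binomial convolutions: `wconv 0 = w^{*1} = w` and
`wconv k = w^{*(k+1)}` with `w^{*(k+1)}_n = ∑_r C(n,r)·w^{*k}_r·w_{n-r}`. -/
noncomputable def wconv : ℕ → ℕ → ℚ
  | 0, n => wseq n
  | k + 1, n => ∑ r ∈ Finset.range (n + 1), (n.choose r : ℚ) * wconv k r * wseq (n - r)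

/-!
For the tree function `T = z e^T` one has `W(z, z) = T(z)²`, and Lagrange inversion gives
`T^a = z^a e^{aT} = ∑ₙ n(n-1)⋯(n-a+1) A_{n-a}(a) zⁿ/n!` with the Abel polynomials
`A_m(x) = x (x + m)^(m-1)`, `∑ A_m(x) z^m/m! = e^{xT}`. So `w^{*k}` is the coefficient sequence
of `T^{2k}`, which is the claimed formula. Everything rests on Abel's identity
`e^{xT} e^{yT} = e^{(x+y)T}`, a binomial convolution identity for the `A_m`. It follows from
`∑ₛ C(n,s) A_s(x) (y+n-s)^(n-s) = (x+y+n)^n`, proved by expanding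
`(y+n-s)^(n-s) = ((x+y+n) - (x+s))^(n-s)`: the coefficient of `(x+y+n)^(n-j)` for `j > 0` is `x`
times a `j`-th finite difference of a polynomial of degree `j - 1`.
-/

open Finset Nat

section BinomialConvolution

variable {R : Type*} [CommSemiring R]

/-- Coefficients of the product of exponential generating functions. -/
def binomialConv (a b : ℕ → R) (n : ℕ) : R :=
  ∑ r ∈ range (n + 1), n.choose r * a r * b (n - r)

/-- Multiplication of the exponential generating function by `z ^ i`. -/
def egfShift (i : ℕ) (a : ℕ → R) (n : ℕ) : R :=
  n.descFactorial i * a (n - i)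

theorem Nat.choose_mul_descFactorial_mul_descFactorial (i j s t : ℕ) :
    (i + j + (s + t)).choose (i + s) * (i + s).descFactorial i * (j + t).descFactorial j =
      (i + j + (s + t)).descFactorial (i + j) * (s + t).choose s := by
  refine Nat.eq_of_mul_eq_mul_right (Nat.mul_pos s.factorial_pos t.factorial_pos) ?_
  calc _ = (i + j + (s + t)).choose (i + s) * ((i + s - i)! * (i + s).descFactorial i) *
          ((j + t - j)! * (j + t).descFactorial j) := by
        simp only [Nat.add_sub_cancel_left]; ring
    _ = (i + j + (s + t))! := by
        rw [Nat.factorial_mul_descFactorial (by omega), Nat.factorial_mul_descFactorial (by omega),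
          ← Nat.choose_mul_factorial_mul_factorial (by omega : i + s ≤ i + j + (s + t)),
          show i + j + (s + t) - (i + s) = j + t by omega]
    _ = (i + j + (s + t) - (i + j))! * (i + j + (s + t)).descFactorial (i + j) :=
        (Nat.factorial_mul_descFactorial (by omega)).symm
    _ = _ := by
        rw [show i + j + (s + t) - (i + j) = s + t by omega,
          ← Nat.choose_mul_factorial_mul_factorial (by omega : s ≤ s + t),
          Nat.add_sub_cancel_left]
        ring

theorem binomialConv_egfShift (i j : ℕ) (a b : ℕ → R) :
    binomialConv (egfShift i a) (egfShift j b) = egfShift (i + j) (binomialConv a b) := by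
  ext n
  simp only [binomialConv, egfShift]
  obtain hn | hn := lt_or_ge n (i + j)
  · rw [Nat.descFactorial_eq_zero_iff_lt.2 hn, Nat.cast_zero, zero_mul]
    refine sum_eq_zero fun r hr => ?_
    obtain hri | hri := lt_or_ge r i
    · simp [Nat.descFactorial_eq_zero_iff_lt.2 hri]
    · simp [Nat.descFactorial_eq_zero_iff_lt.2 (by have := mem_range.1 hr; omega : n - r < j)]
  obtain ⟨m, rfl⟩ := Nat.exists_eq_add_of_le hn
  have below : ∀ r ∈ range i, (i + j + m).choose r * ((r.descFactorial i : R) * a (r - i)) *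
      ((i + j + m - r).descFactorial j * b (i + j + m - r - j)) = 0 := fun r hr => by
    simp [Nat.descFactorial_eq_zero_iff_lt.2 (mem_range.1 hr)]
  have above : ∀ r ∈ range j, (i + j + m).choose (i + (m + 1) + r) *
      (((i + (m + 1) + r).descFactorial i : R) * a (i + (m + 1) + r - i)) *
      ((i + j + m - (i + (m + 1) + r)).descFactorial j * b (i + j + m - (i + (m + 1) + r) - j)) =
        0 := fun r hr => by
    simp [Nat.descFactorial_eq_zero_iff_lt.2 (by have := mem_range.1 hr; omega :
      i + j + m - (i + (m + 1) + r) < j)]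
  rw [show i + j + m + 1 = i + (m + 1) + j by omega, sum_range_add, sum_range_add,
    sum_eq_zero below, sum_eq_zero above, zero_add, add_zero, Nat.add_sub_cancel_left, mul_sum]
  refine sum_congr rfl fun s hs => ?_
  obtain ⟨t, rfl⟩ := Nat.exists_eq_add_of_le (Nat.lt_succ_iff.1 (mem_range.1 hs))
  rw [show i + j + (s + t) - (i + s) = j + t by omega, Nat.add_sub_cancel_left,
    Nat.add_sub_cancel_left, Nat.add_sub_cancel_left]
  calc _ = ((i + j + (s + t)).choose (i + s) * (i + s).descFactorial i *
        (j + t).descFactorial j : ℕ) * (a s * b t) := by push_cast; ring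
    _ = _ := by rw [Nat.choose_mul_descFactorial_mul_descFactorial]; push_cast; ring

end BinomialConvolution

section Abel

variable {R : Type*} [CommRing R]

/-- `x (x + m) ^ (m - 1)`, written so that its value at `m = 0` is `1`. -/
def abelPoly (x : R) (m : ℕ) : R :=
  (x + m) ^ m - m * (x + m) ^ (m - 1)

@[simp]
theorem abelPoly_zero (x : R) : abelPoly x 0 = 1 := by
  simp [abelPoly]

theorem abelPoly_of_pos (x : R) {m : ℕ} (hm : 0 < m) : abelPoly x m = x * (x + m) ^ (m - 1) := by
  obtain ⟨m, rfl⟩ := Nat.exists_eq_add_of_lt hm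
  simp only [abelPoly, zero_add, Nat.add_sub_cancel, pow_succ]
  push_cast
  ring

theorem abelPoly_mul_pow (x : R) {s j : ℕ} (hsj : s ≤ j) (hj : 0 < j) :
    abelPoly x s * (x + s) ^ (j - s) = x * (x + s) ^ (j - 1) := by
  obtain rfl | hs := Nat.eq_zero_or_pos s
  · rw [abelPoly_zero, one_mul, Nat.cast_zero, add_zero, Nat.sub_zero, mul_pow_sub_one hj.ne']
  · rw [abelPoly_of_pos x hs, mul_assoc, ← pow_add]
    congr 2
    omega

theorem sum_neg_one_pow_mul_choose_mul_add_pow_eq_zero {d n : ℕ} (hd : d < n) (x : R) :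
    ∑ s ∈ range (n + 1), (-1 : R) ^ (n - s) * n.choose s * (x + s) ^ d = 0 := by
  have h := congr_fun (fwdDiff_iter_pow_eq_zero_of_lt (R := R) hd) x
  rw [fwdDiff_iter_eq_sum_shift] at h
  simpa [zsmul_eq_mul] using h

theorem sum_choose_mul_abelPoly_mul_neg_pow {j : ℕ} (hj : 0 < j) (x : R) :
    ∑ s ∈ range (j + 1), j.choose s * abelPoly x s * (-(x + s)) ^ (j - s) = 0 := by
  calc _ = x * ∑ s ∈ range (j + 1), (-1 : R) ^ (j - s) * j.choose s * (x + s) ^ (j - 1) := by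
        rw [mul_sum]
        refine sum_congr rfl fun s hs => ?_
        rw [neg_pow]
        linear_combination ((-1 : R) ^ (j - s) * j.choose s) *
          abelPoly_mul_pow x (Nat.lt_succ_iff.1 (mem_range.1 hs)) hj
    _ = 0 := by rw [sum_neg_one_pow_mul_choose_mul_add_pow_eq_zero (by omega), mul_zero]

theorem sum_choose_mul_abelPoly_mul_add_pow (n : ℕ) (x y : R) :
    ∑ s ∈ range (n + 1), n.choose s * abelPoly x s * (y + (n - s : ℕ)) ^ (n - s) =
      (x + y + n) ^ n := by
  set z := x + y + n
  have expand : ∀ s ∈ range (n + 1), n.choose s * abelPoly x s * (y + (n - s : ℕ)) ^ (n - s) =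
      ∑ t ∈ range (n + 1 - s),
        n.choose s * abelPoly x s * ((-(x + s)) ^ t * z ^ (n - s - t) * (n - s).choose t) := by
    intro s hs
    rw [show y + (n - s : ℕ) = -(x + s) + z by
      simp only [z]; push_cast [Nat.lt_succ_iff.1 (mem_range.1 hs)]; ring,
      add_pow, mul_sum, show n + 1 - s = n - s + 1 by have := mem_range.1 hs; omega]
  have regroup : ∀ j ∈ range (n + 1), ∑ s ∈ range (j + 1),
      n.choose s * abelPoly x s * ((-(x + s)) ^ (j - s) * z ^ (n - s - (j - s)) *
        (n - s).choose (j - s)) =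
      n.choose j * z ^ (n - j) *
        ∑ s ∈ range (j + 1), j.choose s * abelPoly x s * (-(x + s)) ^ (j - s) := by
    intro j hj
    rw [mul_sum]
    refine sum_congr rfl fun s hs => ?_
    have hsj := Nat.lt_succ_iff.1 (mem_range.1 hs)
    have hchoose : (n.choose s : R) * (n - s).choose (j - s) = n.choose j * j.choose s := by
      exact_mod_cast congrArg (Nat.cast : ℕ → R) (Nat.choose_mul (n := n) hsj).symm
    rw [show n - s - (j - s) = n - j by omega]
    linear_combination (abelPoly x s * (-(x + s)) ^ (j - s) * z ^ (n - j)) * hchoose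
  rw [sum_congr rfl expand, ← sum_range_diag_flip, sum_congr rfl regroup, sum_range_succ',
    sum_eq_zero fun j _ => by rw [sum_choose_mul_abelPoly_mul_neg_pow j.succ_pos, mul_zero]]
  simp

theorem binomialConv_abelPoly (x y : R) :
    binomialConv (abelPoly x) (abelPoly y) = abelPoly (x + y) := by
  ext n
  rcases n with _ | m
  · simp [binomialConv]
  -- `C(m+1,s) (m+1-s) = (m+1) C(m,s)` turns the second part of `abelPoly y` into Abel's identity
  -- at `m` and `y + 1`.
  have hlower : ∑ s ∈ range (m + 2), ((m + 1).choose s : R) * abelPoly x s *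
      ((m + 1 - s : ℕ) * (y + (m + 1 - s : ℕ)) ^ (m + 1 - s - 1)) =
      (m + 1) * (x + (y + 1) + m) ^ m := by
    rw [sum_range_succ, Nat.sub_self, Nat.cast_zero, zero_mul, mul_zero, add_zero,
      ← sum_choose_mul_abelPoly_mul_add_pow, mul_sum]
    refine sum_congr rfl fun s hs => ?_
    have hsm := Nat.lt_succ_iff.1 (mem_range.1 hs)
    have hchoose : ((m + 1).choose s : R) * (m + 1 - s : ℕ) = (m + 1) * m.choose s := by
      exact_mod_cast congrArg (Nat.cast : ℕ → R)
        ((Nat.choose_mul_succ_eq m s).symm.trans (mul_comm _ _))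
    rw [show m + 1 - s - 1 = m - s by omega,
      show y + (m + 1 - s : ℕ) = y + 1 + (m - s : ℕ) by
        push_cast [hsm, hsm.trans m.le_succ]; ring]
    linear_combination (abelPoly x s * (y + 1 + (m - s : ℕ)) ^ (m - s)) * hchoose
  have hsplit : ∀ s ∈ range (m + 2),
      ((m + 1).choose s : R) * abelPoly x s * abelPoly y (m + 1 - s) =
      (m + 1).choose s * abelPoly x s * (y + (m + 1 - s : ℕ)) ^ (m + 1 - s) -
        (m + 1).choose s * abelPoly x s *
          ((m + 1 - s : ℕ) * (y + (m + 1 - s : ℕ)) ^ (m + 1 - s - 1)) := fun s _ => by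
    unfold abelPoly
    ring
  rw [binomialConv, sum_congr rfl hsplit, sum_sub_distrib, sum_choose_mul_abelPoly_mul_add_pow,
    hlower, abelPoly, Nat.add_sub_cancel]
  push_cast
  ring

end Abel

theorem egfShift_abelPoly_natCast {K : Type*} [Field K] [CharZero K] {i n : ℕ} (hi : 0 < i)
    (hin : i ≤ n) :
    egfShift i (abelPoly (i : K)) n = i * n.descFactorial i * (n : K) ^ ((n : ℤ) - i - 1) := by
  rw [egfShift]
  obtain rfl | hlt := hin.eq_or_lt
  · rw [Nat.sub_self, abelPoly_zero, show (i : ℤ) - i - 1 = -1 by ring, zpow_neg_one]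
    field_simp [Nat.cast_ne_zero.2 hi.ne']
  · rw [abelPoly_of_pos _ (Nat.sub_pos_of_lt hlt), show (i : K) + (n - i : ℕ) = n by
        push_cast [hin]; ring,
      show (n : ℤ) - i - 1 = (n - i - 1 : ℕ) by omega, zpow_natCast]
    ring

theorem wseq_eq_egfShift : wseq = egfShift 2 (abelPoly 2) := by
  ext n
  match n with
  | 0 | 1 | 2 => norm_num [wseq, egfShift]
  | m + 3 =>
    rw [wseq, if_neg (by omega), egfShift, abelPoly_of_pos _ (by omega),
      Nat.succ_descFactorial_succ, Nat.descFactorial_one, show m + 3 - 2 = m + 1 by omega]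
    push_cast
    ring

theorem wconv_eq_egfShift (k : ℕ) :
    wconv k = egfShift (2 * (k + 1)) (abelPoly ((2 * (k + 1) : ℕ) : ℚ)) := by
  induction k with
  | zero => exact wseq_eq_egfShift
  | succ k ih =>
    calc wconv (k + 1) = binomialConv (wconv k) wseq := rfl
      _ = _ := by
        rw [ih, wseq_eq_egfShift, binomialConv_egfShift, binomialConv_abelPoly]
        congr 2
        push_cast
        ring

theorem stmt13_general (n k : ℕ) (hk1 : 1 ≤ k) (hk2 : 2 * k ≤ n) :
    wconv (k - 1) n =
      2 * (k : ℚ) * ((2 * k).factorial : ℚ) * (n : ℚ) ^ ((n : ℤ) - 2 * k - 1) *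
        (n.choose (2 * k) : ℚ) := by
  obtain ⟨j, rfl⟩ := Nat.exists_eq_add_of_le' hk1
  rw [Nat.add_sub_cancel, wconv_eq_egfShift, egfShift_abelPoly_natCast (by omega) hk2,
    Nat.descFactorial_eq_factorial_mul_choose]
  push_cast
  ring

/-- For `n ≥ 2` and `1 ≤ k ≤ n/2`:
`w^{*k}_n = 2k·(2k)!·n^{n-2k-1}·C(n,2k)`, the power `n^{n-2k-1}` being taken
in `ℚ` (so equal to `1/n` when `2k = n`). -/
theorem stmt13 (n k : ℕ) (hn : 2 ≤ n) (hk1 : 1 ≤ k) (hk2 : 2 * k ≤ n) :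
    wconv (k - 1) n =
      2 * (k : ℚ) * ((2 * k).factorial : ℚ) * (n : ℚ) ^ ((n : ℤ) - 2 * k - 1) *
        (n.choose (2 * k) : ℚ) :=
  stmt13_general n k hk1 hk2
end

section
/- Let Y(x) = ∑_{n≥1} n^{n-1} x^n/n! as a formal power series over ℚ. Then for all integers k ≥ 1 and n ≥ 1: n!·[x^n](Y^k) = k·(n-1)·(n-2)···(n-(k-1))·n^{n-k}, where the empty product (k=1) is 1 and n^{n-k} is interpreted in ℚ (the right-hand side being 0 whenever k > n since the product then contains a zero factor). -/
/-!
Write `E_c = ∑ c (c + n)^(n-1) xⁿ/n!` and `P_c = ∑ (c + n)ⁿ xⁿ/n!`, so that `Y = x·E₁`.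
Abel's identity `∑ C(n,k) x (x+k)^(k-1) (y+n-k)^(n-k) = (x+y+n)ⁿ` says `E_a P_b = P_{a+b}`;
since `E_c = P_c - x P_{c+1}`, it follows that `E_a E_b = E_{a+b}`, hence `Y^k = x^k E_k`, and the
coefficient of `xⁿ` is `k nⁿ⁻ᵏ⁻¹ / (n-k)!`. Abel's identity holds as a polynomial identity in `y`:
both sides satisfy `∂_y A_n = n A_{n-1}(y+1)`, and both vanish at `y = -(x+n)`, where the left side
becomes `x` times an `n`-th finite difference of a polynomial of degree `n - 1`.
-/

/-- `Y(x) = ∑_{n≥1} n^{n-1} x^n/n!`, the EGF of labeled rooted trees. -/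
noncomputable def Yt : PowerSeries ℚ :=
  PowerSeries.mk fun n => if n = 0 then 0 else (n : ℚ) ^ (n - 1) / n.factorial

open Finset

section Abel

open Polynomial

variable {R : Type*} [CommRing R]

/-- `abel c n = c (c + n)^(n-1)`, read as `c · c⁻¹ = 1` when `n = 0`. -/
def abel (c : R) (n : ℕ) : R := if n = 0 then 1 else c * (c + n) ^ (n - 1)

@[simp] lemma abel_zero (c : R) : abel c 0 = 1 := rfl

lemma abel_succ (c : R) (n : ℕ) : abel c (n + 1) = c * (c + (n + 1 : ℕ)) ^ n := by
  simp [abel]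

lemma abel_mul_add (c : R) (n : ℕ) : abel c n * (c + n) = c * (c + n) ^ n := by
  cases n with
  | zero => simp
  | succ n => rw [abel_succ, pow_succ]; ring

lemma alternating_sum_choose_mul_add_pow (x : R) {m n : ℕ} (h : m < n) :
    ∑ k ∈ range (n + 1), (-1) ^ (n - k) * n.choose k * (x + k) ^ m = 0 := by
  have := congrFun (fwdDiff_iter_pow_eq_zero_of_lt (R := R) h) x
  rw [fwdDiff_iter_eq_sum_shift] at this
  simpa [zsmul_eq_mul] using this

noncomputable def abelSum (x : R) (n : ℕ) : R[X] :=
  ∑ k ∈ range (n + 1), C (n.choose k * abel x k) * (X + C ((n - k : ℕ) : R)) ^ (n - k)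

lemma derivative_abelSum (x : R) (n : ℕ) :
    derivative (abelSum x (n + 1)) = C ((n + 1 : ℕ) : R) * (abelSum x n).comp (X + 1) := by
  rw [abelSum, abelSum, derivative_sum, sum_range_succ, Polynomial.sum_comp, mul_sum]
  simp only [Nat.sub_self, pow_zero, mul_one, derivative_C, add_zero]
  refine sum_congr rfl fun k hk => ?_
  have hk : k ≤ n := Nat.lt_succ_iff.mp (mem_range.mp hk)
  have hchoose : ((n + 1).choose k : R) * (n - k + 1 : ℕ) = (n + 1 : ℕ) * n.choose k := by
    rw [← Nat.cast_mul, ← Nat.cast_mul, show n - k + 1 = n + 1 - k by omega,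
      ← Nat.choose_mul_succ_eq, mul_comm]
  have hshift : X + C ((n - k + 1 : ℕ) : R) = X + 1 + C ((n - k : ℕ) : R) := by
    rw [Nat.cast_succ, C_add, C_1]; ring
  rw [show n + 1 - k = n - k + 1 by omega]
  simp only [derivative_C_mul, derivative_pow, derivative_add, derivative_X, derivative_C,
    add_zero, mul_one, mul_comp, C_comp, pow_comp, add_comp, X_comp, Nat.add_sub_cancel]
  rw [hshift, ← mul_assoc, ← mul_assoc, ← C_mul, ← C_mul]
  congr 2
  linear_combination abel x k * hchoose

lemma abel_mul_neg_pow (x : R) {k n : ℕ} (hk : k ≤ n) (hn : n ≠ 0) :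
    abel x k * (-(x + k)) ^ (n - k) = x * (-1) ^ (n - k) * (x + k) ^ (n - 1) := by
  cases k with
  | zero =>
    obtain ⟨m, rfl⟩ := Nat.exists_eq_add_one_of_ne_zero hn
    rw [abel_zero, Nat.cast_zero, add_zero, Nat.sub_zero, Nat.add_sub_cancel, neg_pow]
    ring
  | succ k =>
    obtain ⟨j, rfl⟩ := Nat.exists_eq_add_of_le hk
    rw [abel_succ, show k + 1 + j - (k + 1) = j by omega, show k + 1 + j - 1 = k + j by omega,
      neg_pow, pow_add]
    ring

lemma eval_abelSum_neg (x : R) (n : ℕ) : (abelSum x n).eval (-(x + n)) = 0 ^ n := by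
  rcases Nat.eq_zero_or_pos n with rfl | hn
  · simp [abelSum]
  have hterm : ∀ k ∈ range (n + 1),
      (C (n.choose k * abel x k) * (X + C ((n - k : ℕ) : R)) ^ (n - k)).eval (-(x + n)) =
        x * ((-1) ^ (n - k) * n.choose k * (x + k) ^ (n - 1)) := by
    intro k hk
    have hk : k ≤ n := Nat.lt_succ_iff.mp (mem_range.mp hk)
    rw [eval_mul, eval_C, eval_pow, eval_add, eval_X, eval_C, Nat.cast_sub hk,
      show -(x + n) + (n - k) = -(x + k) by ring, mul_assoc, abel_mul_neg_pow x hk hn.ne']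
    ring
  rw [abelSum, eval_finsetSum, sum_congr rfl hterm, ← mul_sum,
    alternating_sum_choose_mul_add_pow x (Nat.sub_lt hn one_pos), zero_pow hn.ne', mul_zero]

lemma abelSum_eq [IsAddTorsionFree R] (x : R) (n : ℕ) : abelSum x n = (X + C (x + n)) ^ n := by
  induction n with
  | zero => simp [abelSum]
  | succ n ih =>
    set D := abelSum x (n + 1) - (X + C (x + (n + 1 : ℕ))) ^ (n + 1)
    have hD' : derivative D = 0 := by
      rw [derivative_sub, derivative_abelSum, ih, derivative_X_add_C_pow, Nat.add_sub_cancel,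
        pow_comp, add_comp, X_comp, C_comp, sub_eq_zero]
      simp only [Nat.cast_succ, C_add, C_1]
      ring
    have hD : D.eval (-(x + (n + 1 : ℕ))) = 0 := by
      rw [eval_sub, eval_abelSum_neg, eval_pow, eval_add, eval_X, eval_C, neg_add_cancel,
        sub_self]
    rw [eq_C_of_derivative_eq_zero hD', eval_C] at hD
    rw [← sub_eq_zero, ← C_0, ← hD, ← eq_C_of_derivative_eq_zero hD']

theorem sum_choose_mul_abel_mul_pow [IsAddTorsionFree R] (x y : R) (n : ℕ) :
    ∑ k ∈ range (n + 1), n.choose k * abel x k * (y + (n - k : ℕ)) ^ (n - k) = (x + y + n) ^ n := by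
  have := congrArg (eval y) (abelSum_eq x n)
  simp only [abelSum, eval_finsetSum, eval_mul, eval_C, eval_pow, eval_add, eval_X] at this
  rw [this]
  ring

end Abel

section EGF

open PowerSeries
open scoped Nat

variable {K : Type*} [Field K] [CharZero K]

lemma mk_div_factorial_mul_mk_div_factorial (f g : ℕ → K) :
    mk (fun n => f n / n !) * mk (fun n => g n / n !) =
      mk fun n => (∑ k ∈ range (n + 1), n.choose k * f k * g (n - k)) / n ! := by
  ext n
  rw [coeff_mul, Nat.sum_antidiagonal_eq_sum_range_succ_mk, coeff_mk, sum_div]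
  refine sum_congr rfl fun k hk => ?_
  have : (n ! : K) ≠ 0 := Nat.cast_ne_zero.mpr n.factorial_ne_zero
  rw [coeff_mk, coeff_mk, Nat.cast_choose K (Nat.lt_succ_iff.mp (mem_range.mp hk))]
  field_simp

noncomputable def abelEGF (c : K) : K⟦X⟧ := mk fun n => abel c n / n !

noncomputable def powEGF (c : K) : K⟦X⟧ := mk fun n => (c + n) ^ n / n !

lemma abelEGF_mul_powEGF (a b : K) : abelEGF a * powEGF b = powEGF (a + b) := by
  ext n
  rw [abelEGF, powEGF, mk_div_factorial_mul_mk_div_factorial, coeff_mk,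
    sum_choose_mul_abel_mul_pow, powEGF, coeff_mk]

lemma abelEGF_eq_sub (c : K) : abelEGF c = powEGF c - X * powEGF (c + 1) := by
  ext n
  cases n with
  | zero => simp [abelEGF, powEGF]
  | succ n =>
    rw [map_sub, coeff_succ_X_mul, abelEGF, powEGF, powEGF, coeff_mk, coeff_mk, coeff_mk,
      abel_succ, Nat.factorial_succ]
    push_cast
    field_simp
    ring

lemma abelEGF_mul (a b : K) : abelEGF a * abelEGF b = abelEGF (a + b) := by
  rw [abelEGF_eq_sub b, mul_sub, mul_left_comm, abelEGF_mul_powEGF, abelEGF_mul_powEGF,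
    ← add_assoc, ← abelEGF_eq_sub]

lemma abelEGF_zero : abelEGF (0 : K) = 1 := by
  ext n
  cases n with
  | zero => simp [abelEGF]
  | succ n => simp [abelEGF, abel_succ]

lemma abelEGF_pow (c : K) (k : ℕ) : abelEGF c ^ k = abelEGF (k * c) := by
  induction k with
  | zero => simp [abelEGF_zero]
  | succ k ih => rw [pow_succ, ih, abelEGF_mul, Nat.cast_succ, add_one_mul]

end EGF

open PowerSeries
open scoped Nat

lemma Yt_eq_X_mul_abelEGF : Yt = X * abelEGF 1 := by
  ext n
  cases n with
  | zero => simp [Yt]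
  | succ n =>
    rw [coeff_succ_X_mul, Yt, abelEGF, coeff_mk, coeff_mk, if_neg n.succ_ne_zero,
      Nat.add_sub_cancel, Nat.factorial_succ]
    have := abel_mul_add (1 : ℚ) n
    push_cast
    field_simp
    linear_combination -this

lemma coeff_Yt_pow (k n : ℕ) :
    coeff n (Yt ^ k) = if k ≤ n then abel (k : ℚ) (n - k) / (n - k)! else 0 := by
  rw [Yt_eq_X_mul_abelEGF, mul_pow, abelEGF_pow, mul_one, coeff_X_pow_mul', abelEGF, coeff_mk]

/-- For `k ≥ 1`, `n ≥ 1`: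
`n!·[x^n](Y^k) = k·(n-1)(n-2)···(n-(k-1))·n^{n-k}` (the power taken in `ℚ`). -/
theorem stmt14 (k n : ℕ) (hk : 1 ≤ k) (hn : 1 ≤ n) :
    (n.factorial : ℚ) * PowerSeries.coeff n (Yt ^ k) =
      (k : ℚ) * (∏ i ∈ Finset.range (k - 1), ((n : ℚ) - (i + 1))) *
        (n : ℚ) ^ ((n : ℤ) - k) := by
  have hprod : ∏ i ∈ range (k - 1), ((n : ℚ) - (i + 1)) = (n - 1).descFactorial (k - 1) := by
    rw [← descPochhammer_eval_eq_descFactorial, descPochhammer_eval_eq_prod_range,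
      Nat.cast_sub hn]
    exact prod_congr rfl fun i _ => by ring
  rw [coeff_Yt_pow, hprod]
  split_ifs with hkn
  · obtain ⟨m, rfl⟩ := Nat.exists_eq_add_of_le hkn
    have hfact : ((k + m)! : ℚ) = (k + m) * m ! * (k + m - 1).descFactorial (k - 1) := by
      rw [← Nat.mul_factorial_pred (by omega), ← Nat.factorial_mul_descFactorial
        (show k - 1 ≤ k + m - 1 by omega), show k + m - 1 - (k - 1) = m by omega]
      push_cast
      ring
    rw [hfact, Nat.add_sub_cancel_left, show ((k + m : ℕ) : ℤ) - k = m by push_cast; ring,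
      zpow_natCast, Nat.cast_add]
    have := abel_mul_add (k : ℚ) m
    field_simp
    linear_combination this
  · rw [Nat.descFactorial_eq_zero_iff_lt.mpr (by omega)]
    simp
end

section
/- Let Q_n := ∑_{k=2}^{⌊n/2⌋} n!/((n-2k)!·n^{2k}) (a real number). Then Q_n ~ √(π/8)·√n as n → ∞, i.e., Q_n/√n tends to √(π/8). -/
/-!
Writing `n! / ((n - 2k)! n^(2k)) = ∏_{i<2k} (1 - i/n)` and using `1 - x ≤ e^(-x)`, the `k`-th
term is at most `exp (-2(k-1)²/n)`; comparing with `∫₀^∞ exp (-2x²/n) dx = √(π/8) √n` gives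
`Q_n ≤ √(π/8) √n` for every `n`. Conversely `1 - x ≥ exp (-x - 2x²)` on `x ≤ 1/2` shows that for
`k ≤ A√n` the term is at least `exp (-2k²/n) exp (-16A³/√n)`, so that, comparing the sum with an
integral from below, `liminf Q_n/√n ≥ ∫₀^A exp (-2u²) du`; letting `A → ∞` gives the limit.
-/

open Filter Finset Real MeasureTheory Topology

lemma factorial_div_factorial_sub_mul_pow_eq_prod {n m : ℕ} (hm : m ≤ n) :
    (n.factorial : ℝ) / ((n - m).factorial * (n : ℝ) ^ m) = ∏ i ∈ range m, (1 - (i : ℝ) / n) := by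
  rcases Nat.eq_zero_or_pos n with rfl | hn
  · obtain rfl : m = 0 := by omega
    simp
  rw [← Nat.factorial_mul_descFactorial hm, Nat.descFactorial_eq_prod_range, Nat.cast_mul,
    mul_div_mul_left _ _ (by positivity), Nat.cast_prod,
    show (n : ℝ) ^ m = ∏ _i ∈ range m, (n : ℝ) by simp, ← prod_div_distrib]
  refine prod_congr rfl fun i hi => ?_
  rw [Nat.cast_sub (by grind), sub_div, div_self (by positivity)]

lemma prod_one_sub_le_exp_neg_sum {ι : Type*} (s : Finset ι) (x : ι → ℝ)
    (hx : ∀ i ∈ s, x i ≤ 1) : ∏ i ∈ s, (1 - x i) ≤ exp (-∑ i ∈ s, x i) := by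
  rw [← sum_neg_distrib, exp_sum]
  exact prod_le_prod (fun i hi => sub_nonneg.2 (hx i hi)) fun i _ => one_sub_le_exp_neg _

lemma exp_neg_add_two_mul_sq_le_one_sub {x : ℝ} (hx : x ≤ 1 / 2) :
    exp (-(x + 2 * x ^ 2)) ≤ 1 - x := by
  have hpos : 0 < 1 - x := by linarith
  calc exp (-(x + 2 * x ^ 2)) ≤ exp (1 - (1 - x)⁻¹) := by
        rw [exp_le_exp, ← sub_nonneg,
          show 1 - (1 - x)⁻¹ - -(x + 2 * x ^ 2) = x ^ 2 * (1 - 2 * x) / (1 - x) by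
            field_simp; ring]
        have : 0 ≤ 1 - 2 * x := by linarith
        positivity
    _ ≤ 1 - x := by
        rw [← exp_log hpos, exp_le_exp, exp_log hpos]
        exact one_sub_inv_le_log_of_pos hpos

lemma exp_neg_sum_le_prod_one_sub {ι : Type*} (s : Finset ι) (x : ι → ℝ)
    (hx : ∀ i ∈ s, x i ≤ 1 / 2) :
    exp (-∑ i ∈ s, (x i + 2 * x i ^ 2)) ≤ ∏ i ∈ s, (1 - x i) := by
  rw [← sum_neg_distrib, exp_sum]
  exact prod_le_prod (fun i _ => (exp_pos _).le)
    fun i hi => exp_neg_add_two_mul_sq_le_one_sub (hx i hi)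

lemma sum_range_natCast_id (m : ℕ) : ∑ i ∈ range m, (i : ℝ) = m * (m - 1) / 2 := by
  induction m with
  | zero => simp
  | succ m ih => rw [sum_range_succ, ih]; push_cast; ring

lemma prod_range_one_sub_div_le_exp {n k : ℕ} (hk : 1 ≤ k) (hkn : 2 * k ≤ n) :
    ∏ i ∈ range (2 * k), (1 - (i : ℝ) / n) ≤ exp (-2 * ((k : ℝ) - 1) ^ 2 / n) := by
  refine (prod_one_sub_le_exp_neg_sum _ _ fun i hi => div_le_one_of_le₀ ?_ n.cast_nonneg).trans ?_
  · exact_mod_cast (mem_range.1 hi).le.trans hkn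
  rw [exp_le_exp, ← sum_div, sum_range_natCast_id, neg_mul, neg_div, neg_le_neg_iff]
  gcongr
  push_cast
  nlinarith [(Nat.one_le_cast (α := ℝ)).2 hk]

lemma exp_le_prod_range_one_sub_div {n k : ℕ} (hkn : 4 * k ≤ n) :
    exp (-(2 * k ^ 2 / n + 16 * k ^ 3 / n ^ 2)) ≤ ∏ i ∈ range (2 * k), (1 - (i : ℝ) / n) := by
  rcases Nat.eq_zero_or_pos k with rfl | hk
  · simp
  have hn : (0 : ℝ) < n := by exact_mod_cast (by omega : 0 < n)
  have hin : ∀ i ∈ range (2 * k), (i : ℝ) / n ≤ 2 * k / n := fun i hi => by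
    gcongr; exact_mod_cast (mem_range.1 hi).le
  refine le_trans ?_ (exp_neg_sum_le_prod_one_sub _ _ fun i hi => (hin i hi).trans ?_)
  · rw [exp_le_exp, neg_le_neg_iff, sum_add_distrib]
    gcongr
    · rw [← sum_div, sum_range_natCast_id]
      gcongr
      push_cast
      nlinarith [k.cast_nonneg (α := ℝ)]
    · calc ∑ i ∈ range (2 * k), (2 * ((i : ℝ) / n) ^ 2 : ℝ)
          ≤ ∑ _i ∈ range (2 * k), (2 * (2 * (k : ℝ) / n) ^ 2 : ℝ) := by
            gcongr with i hi
            exact_mod_cast (mem_range.1 hi).le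
        _ = 16 * (k : ℝ) ^ 3 / (n : ℝ) ^ 2 := by simp; ring
  · rw [div_le_iff₀ hn]
    have : (4 * k : ℝ) ≤ n := by exact_mod_cast hkn
    linarith

lemma antitoneOn_exp_neg_mul_sq {c : ℝ} (hc : 0 ≤ c) :
    AntitoneOn (fun x : ℝ => exp (-c * x ^ 2)) (Set.Ici 0) := by
  intro x hx y _ hxy
  simp only [exp_le_exp, neg_mul, neg_le_neg_iff]
  gcongr

lemma sum_range_exp_neg_mul_sq_le {c : ℝ} (hc : 0 < c) (N : ℕ) :
    ∑ i ∈ range N, exp (-c * ((i : ℝ) + 1) ^ 2) ≤ √(π / c) / 2 := by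
  have hf : AntitoneOn (fun x : ℝ => exp (-c * x ^ 2)) (Set.Icc 0 (0 + N)) :=
    (antitoneOn_exp_neg_mul_sq hc.le).mono Set.Icc_subset_Ici_self
  calc ∑ i ∈ range N, exp (-c * ((i : ℝ) + 1) ^ 2)
      ≤ ∫ x in (0 : ℝ)..0 + N, exp (-c * x ^ 2) := by simpa using hf.sum_le_integral
    _ ≤ ∫ x in Set.Ioi 0, exp (-c * x ^ 2) := by
      rw [intervalIntegral.integral_of_le (by positivity)]
      exact setIntegral_mono_set (integrable_exp_neg_mul_sq hc).integrableOn
        (ae_of_all _ fun _ => (exp_pos _).le) Set.Ioc_subset_Ioi_self.eventuallyLE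
    _ = √(π / c) / 2 := integral_gaussian_Ioi c

lemma integral_le_sum_Icc_exp_neg_mul_sq {c : ℝ} (hc : 0 ≤ c) {K : ℕ} (hK : 1 ≤ K) :
    ∫ x in (2 : ℝ)..K + 1, exp (-c * x ^ 2) ≤ ∑ k ∈ Icc 2 K, exp (-c * (k : ℝ) ^ 2) := by
  have hf : AntitoneOn (fun x : ℝ => exp (-c * x ^ 2)) (Set.Icc ((2 : ℕ) : ℝ) ((K + 1 : ℕ) : ℝ)) :=
    (antitoneOn_exp_neg_mul_sq hc).mono fun x hx => le_trans (by positivity) hx.1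
  simpa [Finset.Ico_add_one_right_eq_Icc] using hf.integral_le_sum_Ico (by omega)

lemma integral_exp_neg_mul_sq_div_eq {n : ℕ} (hn : 0 < n) (a b : ℝ) :
    ∫ x in a..b, exp (-(2 / n) * x ^ 2) = √n * ∫ u in a / √n..b / √n, exp (-2 * u ^ 2) := by
  have hs : 0 < √(n : ℝ) := sqrt_pos.2 (by exact_mod_cast hn)
  rw [← smul_eq_mul, ← intervalIntegral.integral_comp_div _ hs.ne']
  congr 1 with x
  rw [div_pow, sq_sqrt (by positivity)]
  ring_nf

lemma integral_exp_neg_mul_sq_sub_le {c a b A : ℝ} (hc : 0 ≤ c) (ha : 0 ≤ a) (hA : 0 ≤ A)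
    (hAb : A ≤ b) : (∫ u in 0..A, exp (-c * u ^ 2)) - a ≤ ∫ u in a..b, exp (-c * u ^ 2) := by
  have hint (x y : ℝ) : IntervalIntegrable (fun u : ℝ => exp (-c * u ^ 2)) volume x y :=
    (by fun_prop : Continuous fun u : ℝ => exp (-c * u ^ 2)).intervalIntegrable x y
  rw [← intervalIntegral.integral_interval_sub_left (hint 0 b) (hint 0 a)]
  have hAb : ∫ u in 0..A, exp (-c * u ^ 2) ≤ ∫ u in 0..b, exp (-c * u ^ 2) :=
    intervalIntegral.integral_mono_interval le_rfl hA hAb (ae_of_all _ fun _ => (exp_pos _).le)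
      (hint 0 b)
  have ha : ∫ u in 0..a, exp (-c * u ^ 2) ≤ a := by
    calc ∫ u in 0..a, exp (-c * u ^ 2) ≤ ∫ _u in 0..a, (1 : ℝ) :=
          intervalIntegral.integral_mono_on ha (hint 0 a) (by simp) fun u _ => by
            rw [exp_le_one_iff, neg_mul, neg_nonpos]; positivity
      _ = a := by simp
  exact sub_le_sub hAb ha

lemma sqrt_pi_div_two_div_two : √(π / 2) / 2 = √(π / 8) := by
  rw [show π / 8 = π / 2 / 2 ^ 2 by ring, sqrt_div (x := π / 2) (by positivity),
    sqrt_sq zero_le_two]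

lemma tendsto_sqrt_natCast_atTop : Tendsto (fun n : ℕ => √(n : ℝ)) atTop atTop :=
  tendsto_sqrt_atTop.comp tendsto_natCast_atTop_atTop

lemma tendsto_integral_exp_neg_two_mul_sq :
    Tendsto (fun A => ∫ u in 0..A, exp (-2 * u ^ 2)) atTop (𝓝 √(π / 8)) := by
  have := intervalIntegral_tendsto_integral_Ioi 0
    (integrable_exp_neg_mul_sq two_pos).integrableOn tendsto_id
  rwa [integral_gaussian_Ioi, sqrt_pi_div_two_div_two] at this

noncomputable def qSum (n : ℕ) : ℝ :=
  ∑ k ∈ Icc 2 (n / 2), (n.factorial : ℝ) / ((n - 2 * k).factorial * (n : ℝ) ^ (2 * k))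

lemma qSum_eq_sum_prod (n : ℕ) :
    qSum n = ∑ k ∈ Icc 2 (n / 2), ∏ i ∈ range (2 * k), (1 - (i : ℝ) / n) :=
  sum_congr rfl fun k hk =>
    factorial_div_factorial_sub_mul_pow_eq_prod (by have := (mem_Icc.1 hk).2; omega)

lemma qSum_le (n : ℕ) : qSum n ≤ √(π / 8) * √n := by
  rcases Nat.eq_zero_or_pos n with rfl | hn
  · simp [qSum]
  rw [qSum_eq_sum_prod]
  calc ∑ k ∈ Icc 2 (n / 2), ∏ i ∈ range (2 * k), (1 - (i : ℝ) / n)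
      ≤ ∑ k ∈ Icc 2 (n / 2), exp (-(2 / n) * ((k : ℝ) - 1) ^ 2) := by
        refine sum_le_sum fun k hk => ?_
        have hk := mem_Icc.1 hk
        refine (prod_range_one_sub_div_le_exp (by omega) (by omega)).trans_eq ?_
        ring_nf
    _ = ∑ i ∈ range (n / 2 - 1), exp (-(2 / n) * ((i : ℝ) + 1) ^ 2) := by
        rw [← Ico_add_one_right_eq_Icc, sum_Ico_eq_sum_range,
          show n / 2 + 1 - 2 = n / 2 - 1 by omega]
        refine sum_congr rfl fun i _ => ?_
        push_cast
        ring_nf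
    _ ≤ √(π / (2 / n)) / 2 := sum_range_exp_neg_mul_sq_le (by positivity) _
    _ = √(π / 8) * √n := by
        rw [← sqrt_pi_div_two_div_two, div_mul_eq_mul_div, ← sqrt_mul (by positivity)]
        congr 2
        field_simp

lemma sum_exp_le_qSum {n K : ℕ} (hK : 4 * K ≤ n) :
    ∑ k ∈ Icc 2 K, exp (-(2 * (k : ℝ) ^ 2 / n + 16 * (k : ℝ) ^ 3 / (n : ℝ) ^ 2)) ≤ qSum n := by
  rw [qSum_eq_sum_prod]
  calc ∑ k ∈ Icc 2 K, exp (-(2 * (k : ℝ) ^ 2 / n + 16 * (k : ℝ) ^ 3 / (n : ℝ) ^ 2))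
      ≤ ∑ k ∈ Icc 2 K, ∏ i ∈ range (2 * k), (1 - (i : ℝ) / n) :=
        sum_le_sum fun k hk => exp_le_prod_range_one_sub_div (by have := (mem_Icc.1 hk).2; omega)
    _ ≤ ∑ k ∈ Icc 2 (n / 2), ∏ i ∈ range (2 * k), (1 - (i : ℝ) / n) := by
        refine sum_le_sum_of_subset_of_nonneg (Icc_subset_Icc le_rfl (by omega)) fun k hk _ => ?_
        refine prod_nonneg fun i hi => sub_nonneg.2 (div_le_one_of_le₀ ?_ n.cast_nonneg)
        have := (mem_Icc.1 hk).2
        exact_mod_cast (show i ≤ n by have := mem_range.1 hi; omega)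

lemma sqrt_mul_integral_sub_le_sum {n K : ℕ} {A : ℝ} (hn : 0 < n) (hA : 0 ≤ A) (hK : 1 ≤ K)
    (hAK : A * √n ≤ K + 1) :
    √n * ((∫ u in 0..A, exp (-2 * u ^ 2)) - 2 / √n) ≤
      ∑ k ∈ Icc 2 K, exp (-(2 / n) * (k : ℝ) ^ 2) := by
  have hs : 0 < √(n : ℝ) := sqrt_pos.2 (by exact_mod_cast hn)
  calc √n * ((∫ u in 0..A, exp (-2 * u ^ 2)) - 2 / √n)
      ≤ √n * ∫ u in 2 / √n..(K + 1) / √n, exp (-2 * u ^ 2) := by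
        gcongr
        exact integral_exp_neg_mul_sq_sub_le zero_le_two (by positivity) hA
          (by rwa [le_div_iff₀ hs])
    _ = ∫ x in (2 : ℝ)..K + 1, exp (-(2 / n) * x ^ 2) :=
        (integral_exp_neg_mul_sq_div_eq hn _ _).symm
    _ ≤ ∑ k ∈ Icc 2 K, exp (-(2 / n) * (k : ℝ) ^ 2) :=
        integral_le_sum_Icc_exp_neg_mul_sq (by positivity) hK

lemma eventually_le_qSum_div_sqrt {A : ℝ} (hA : 0 < A) :
    ∀ᶠ n : ℕ in atTop,
      exp (-16 * A ^ 3 / √n) * ((∫ u in 0..A, exp (-2 * u ^ 2)) - 2 / √n) ≤ qSum n / √n := by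
  filter_upwards [tendsto_sqrt_natCast_atTop.eventually_ge_atTop (4 * A),
    tendsto_sqrt_natCast_atTop.eventually_ge_atTop (2 / A)] with n h4A h2A
  set s := √(n : ℝ)
  have hs : 0 < s := lt_of_lt_of_le (by positivity) h2A
  have hn : 0 < n := by exact_mod_cast sqrt_pos.1 hs
  have hsn : s ^ 2 = n := sq_sqrt n.cast_nonneg
  set K := ⌊A * s⌋₊
  have hKle : (K : ℝ) ≤ A * s := Nat.floor_le (by positivity)
  have hK1 : 1 ≤ K := (Nat.one_le_floor_iff _).2 (by rw [div_le_iff₀ hA] at h2A; linarith)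
  have h4K : 4 * K ≤ n := by
    have : 4 * (K : ℝ) ≤ n := by rw [← hsn]; nlinarith
    exact_mod_cast this
  have hcube (k : ℕ) (hk : k ∈ Icc 2 K) : 16 * (k : ℝ) ^ 3 / (n : ℝ) ^ 2 ≤ 16 * A ^ 3 / s := by
    have hk : (k : ℝ) ≤ A * s := le_trans (by exact_mod_cast (mem_Icc.1 hk).2) hKle
    calc 16 * (k : ℝ) ^ 3 / (n : ℝ) ^ 2 ≤ 16 * (A * s) ^ 3 / (s ^ 2) ^ 2 := by
          rw [hsn]; gcongr
      _ = 16 * A ^ 3 / s := by field_simp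
  rw [le_div_iff₀ hs]
  calc exp (-16 * A ^ 3 / s) * ((∫ u in 0..A, exp (-2 * u ^ 2)) - 2 / s) * s
      = exp (-16 * A ^ 3 / s) * (s * ((∫ u in 0..A, exp (-2 * u ^ 2)) - 2 / s)) := by ring
    _ ≤ exp (-16 * A ^ 3 / s) * ∑ k ∈ Icc 2 K, exp (-(2 / n) * (k : ℝ) ^ 2) := by
        gcongr
        exact sqrt_mul_integral_sub_le_sum hn hA.le hK1 (Nat.lt_floor_add_one _).le
    _ ≤ ∑ k ∈ Icc 2 K, exp (-(2 * (k : ℝ) ^ 2 / n + 16 * (k : ℝ) ^ 3 / (n : ℝ) ^ 2)) := by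
        rw [mul_sum]
        refine sum_le_sum fun k hk => ?_
        rw [← exp_add, exp_le_exp]
        have := hcube k hk
        ring_nf at this ⊢
        linarith
    _ ≤ qSum n := sum_exp_le_qSum h4K

open Filter in
/-- With `Q_n = ∑_{k=2}^{⌊n/2⌋} n!/((n-2k)!·n^{2k})`, one has
`Q_n ~ √(π/8)·√n` as `n → ∞`. -/
theorem stmt16 :
    Tendsto
      (fun n : ℕ =>
        (∑ k ∈ Finset.Icc 2 (n / 2),
            (n.factorial : ℝ) / (((n - 2 * k).factorial : ℝ) * (n : ℝ) ^ (2 * k))) /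
          Real.sqrt n)
      atTop (nhds (Real.sqrt (Real.pi / 8))) := by
  change Tendsto (fun n => qSum n / √n) atTop (𝓝 √(π / 8))
  refine tendsto_order.2 ⟨fun a ha => ?_, fun b hb => Eventually.of_forall fun n =>
    (div_le_of_le_mul₀ (sqrt_nonneg _) (sqrt_nonneg _) (qSum_le n)).trans_lt hb⟩
  obtain ⟨A, haA, hA⟩ := ((tendsto_integral_exp_neg_two_mul_sq.eventually (lt_mem_nhds ha)).and
    (eventually_gt_atTop 0)).exists
  have hlim : Tendsto (fun n : ℕ =>
      exp (-16 * A ^ 3 / √n) * ((∫ u in 0..A, exp (-2 * u ^ 2)) - 2 / √n)) atTop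
      (𝓝 (∫ u in 0..A, exp (-2 * u ^ 2))) := by
    have hdiv (c : ℝ) : Tendsto (fun n : ℕ => c / √n) atTop (𝓝 0) :=
      tendsto_const_nhds.div_atTop tendsto_sqrt_natCast_atTop
    simpa using ((continuous_exp.tendsto 0).comp (hdiv _)).mul (tendsto_const_nhds.sub (hdiv 2))
  filter_upwards [hlim.eventually (lt_mem_nhds haA), eventually_le_qSum_div_sqrt hA] with n h1 h2
  exact h1.trans_le h2
end
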